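/- arXiv:2103.09256 — 7 statements merged into one kernel-verified Lean document; each statement's English description precedes it below -/
import Mathlib

section
/- Let n ≥ 1, k ≥ 1, and let p = p_1 p_2 ⋯ p_j be a pre-perm with 1 ≤ j ≤ n. Then the first element of the list Rec(p,k) is p itself, and the last element of Rec(p,k) is rev(p^{+(k−1)}), the reversal of p with every colour incremented by k−1 modulo k. -/
/-- Increment the colour of every symbol of a coloured pre-permutation by `s`, modulo `k`. -/
def colShift (k s : ℕ) (p : List (ℕ × ℕ)) : List (ℕ × ℕ) :=
  p.map (fun x => (x.1, (x.2 + s) % k))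

/-- The colour-incrementing prefix-reversal of length `j` (a "flip"):
reverse the first `j` symbols and increment their colours by 1 modulo `k`. -/
def cflip (k j : ℕ) (p : List (ℕ × ℕ)) : List (ℕ × ℕ) :=
  colShift k 1 (p.take j).reverse ++ p.drop j

/-- `p` is a `k`-coloured permutation of order `n`: its values are a permutation
of `{1,…,n}` and all its colours lie in `{0,…,k-1}`. -/
def IsCPerm (n k : ℕ) (p : List (ℕ × ℕ)) : Prop :=
  (p.map Prod.fst).Perm ((List.range n).map (· + 1)) ∧ ∀ x ∈ p, x.2 < k

/-- `p` is a pre-perm: distinct values from `{1,…,n}`, colours in `{0,…,k-1}`. -/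
def IsPrePerm (n k : ℕ) (p : List (ℕ × ℕ)) : Prop :=
  (p.map Prod.fst).Nodup ∧ ∀ x ∈ p, (1 ≤ x.1 ∧ x.1 ≤ n) ∧ x.2 < k

/-- The circular string `ρ(p) = p^{+(k-1)} · p^{+(k-2)} ⋯ p^{+0}`. -/
def rho (k : ℕ) (p : List (ℕ × ℕ)) : List (ℕ × ℕ) :=
  ((List.range k).reverse).flatMap (fun s => colShift k s p)

/-- `ρ(p)_i`: the length `j-1` contiguous subword of the circular string `ρ(p)`
ending with `r_{i-1}` (1-based indices modulo `m = k·j`, where `j = p.length`). -/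
def rhoSub (k : ℕ) (p : List (ℕ × ℕ)) (i : ℕ) : List (ℕ × ℕ) :=
  (List.range (p.length - 1)).map
    (fun t => (rho k p).getD ((i + t + k * p.length - p.length) % (k * p.length)) (0, 0))

/-- Fuel-indexed version of the recursive listing `Rec(p,k)`; `fuel = p.length`. -/
def RecAux (k : ℕ) : ℕ → List (ℕ × ℕ) → List (List (ℕ × ℕ))
  | 0, p => (List.range k).map (fun s => colShift k s p)
  | fuel + 1, p =>
    if p.length ≤ 1 then (List.range k).map (fun s => colShift k s p)
    else ((List.range (k * p.length)).reverse).flatMap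
      (fun i => (RecAux k fuel (rhoSub k p (i + 1))).map (fun q => q ++ [(rho k p).getD i (0, 0)]))

/-- The recursive listing `Rec(p,k)`:
`Rec(p₁,k) = p₁, p₁^{+1}, …, p₁^{+(k-1)}` when `p` has length 1, and
`Rec(p,k) = Rec(ρ(p)_m,k)·r_m, Rec(ρ(p)_{m-1},k)·r_{m-1}, …, Rec(ρ(p)_1,k)·r_1` otherwise. -/
def RecList (k : ℕ) (p : List (ℕ × ℕ)) : List (List (ℕ × ℕ)) :=
  RecAux k p.length p

/-- The identity coloured permutation `1⁰2⁰⋯n⁰`. -/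
def idPerm (n : ℕ) : List (ℕ × ℕ) := (List.range n).map (fun i => (i + 1, 0))

/-!
Since colours are taken modulo `k`, the circular string `ρ(p)` ends with the copy `p^{+0} = p`.
Hence the window `ρ(p)_m` is `p` without its last symbol, and the symbol appended to it is
`r_m`, that last symbol; the window `ρ(p)_1` is `p` without its first symbol, and the symbol
appended to it is `r_1`, the first symbol of `p^{+(k-1)}`. By induction on the length of `p`,
the first block `Rec(ρ(p)_m,k)·r_m` of `Rec(p,k)` therefore starts with `p`, and the last block
`Rec(ρ(p)_1,k)·r_1` ends with `rev(tail(p)^{+(k-1)}) · r_1 = rev(p^{+(k-1)})`.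
-/

lemma sub_one_mul_add_self {k : ℕ} (hk : 1 ≤ k) (j : ℕ) : (k - 1) * j + j = k * j := by
  rw [Nat.sub_one_mul]
  exact Nat.sub_add_cancel (Nat.le_mul_of_pos_left j hk)

lemma List.dropLast_append_getD_length_sub_one {α : Type*} {l : List α} (hl : l ≠ []) (d : α) :
    l.dropLast ++ [l.getD (l.length - 1) d] = l := by
  rw [List.getD_eq_getElem _ _ (by simpa [Nat.pos_iff_ne_zero] using hl),
    ← List.getLast_eq_getElem hl]
  exact List.dropLast_append_getLast hl

lemma List.tail_reverse_append_getD_zero {α : Type*} {l : List α} (hl : l ≠ []) (d : α) :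
    l.tail.reverse ++ [l.getD 0 d] = l.reverse := by
  cases l with
  | nil => exact absurd rfl hl
  | cons a l => simp

lemma head?_flatMap_range_reverse {β : Type*} {f : ℕ → List β} {m : ℕ} {x : β}
    (h : (f m).head? = some x) : ((List.range (m + 1)).reverse.flatMap f).head? = some x := by
  simp [List.range_succ, List.head?_append, h]

lemma getLast?_flatMap_range_reverse {β : Type*} {f : ℕ → List β} {m : ℕ} {x : β}
    (h : (f 0).getLast? = some x) :
    ((List.range (m + 1)).reverse.flatMap f).getLast? = some x := by
  simp [List.range_succ_eq_map, List.getLast?_append, h]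

lemma colShift_length (k s : ℕ) (p : List (ℕ × ℕ)) : (colShift k s p).length = p.length := by
  simp [colShift]

lemma colShift_tail (k s : ℕ) (p : List (ℕ × ℕ)) :
    colShift k s p.tail = (colShift k s p).tail := by
  simp [colShift, List.map_tail]

section

variable {k : ℕ} {p : List (ℕ × ℕ)}

lemma colShift_zero_of_lt (h : ∀ x ∈ p, x.2 < k) : colShift k 0 p = p := by
  conv_rhs => rw [← List.map_id p]
  exact List.map_congr_left fun x hx => by simp [Nat.mod_eq_of_lt (h x hx)]

lemma rho_eq_append (hk : 1 ≤ k) (h : ∀ x ∈ p, x.2 < k) :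
    rho k p = ((List.range (k - 1)).reverse.flatMap fun s => colShift k (s + 1) p) ++ p := by
  obtain ⟨k, rfl⟩ : ∃ k', k = k' + 1 := ⟨k - 1, by omega⟩
  simp [rho, List.range_succ_eq_map, List.flatMap_append, colShift_zero_of_lt h,
    ← List.map_reverse, List.flatMap_map]

lemma rho_getD_of_le (hk : 1 ≤ k) (h : ∀ x ∈ p, x.2 < k) {i : ℕ}
    (hi : (k - 1) * p.length ≤ i) (d : ℕ × ℕ) : (rho k p).getD i d = p.getD (i - (k - 1) * p.length) d := by
  have hlen : ((List.range (k - 1)).reverse.flatMap fun s => colShift k (s + 1) p).length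
      = (k - 1) * p.length := by
    simp [List.length_flatMap, colShift_length]
  rw [rho_eq_append hk h, List.getD_append_right _ _ _ _ (by omega), hlen]

lemma rho_getD_zero (hk : 1 ≤ k) (hp : p ≠ []) (d : ℕ × ℕ) :
    (rho k p).getD 0 d = (colShift k (k - 1) p).getD 0 d := by
  obtain ⟨k, rfl⟩ : ∃ k', k = k' + 1 := ⟨k - 1, by omega⟩
  simp only [rho, List.range_succ, List.reverse_append, List.reverse_singleton,
    List.singleton_append, List.flatMap_cons, Nat.add_sub_cancel]
  exact List.getD_append _ _ _ 0 (by simpa [colShift_length] using List.length_pos_of_ne_nil hp)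

lemma rhoSub_eq_take_drop (hk : 1 ≤ k) (h : ∀ x ∈ p, x.2 < k) {i a : ℕ} (ha : a ≤ 1)
    (hi : (i + k * p.length - p.length) % (k * p.length) = (k - 1) * p.length + a) :
    rhoSub k p i = (p.drop a).take (p.length - 1) := by
  have hkj := sub_one_mul_add_self hk p.length
  apply List.ext_getElem (by
    simp only [rhoSub, List.length_map, List.length_range, List.length_take, List.length_drop]
    omega)
  intro t ht _
  simp only [rhoSub, List.length_map, List.length_range] at ht
  have hidx : (i + t + k * p.length - p.length) % (k * p.length)
      = (k - 1) * p.length + (a + t) := by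
    rw [show i + t + k * p.length - p.length = (i + k * p.length - p.length) + t by omega,
      Nat.add_mod, hi, Nat.mod_eq_of_lt (by omega : t < k * p.length),
      Nat.mod_eq_of_lt (by omega)]
    ring
  simp only [rhoSub, List.getElem_map, List.getElem_range, List.getElem_take, List.getElem_drop,
    hidx, rho_getD_of_le hk h (Nat.le_add_right _ _), Nat.add_sub_cancel_left]
  exact List.getD_eq_getElem _ _ _

lemma rhoSub_mul_length (hk : 1 ≤ k) (h : ∀ x ∈ p, x.2 < k) (hp : p ≠ []) :
    rhoSub k p (k * p.length) = p.dropLast := by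
  have hj := List.length_pos_of_ne_nil hp
  have hkj := sub_one_mul_add_self hk p.length
  rw [rhoSub_eq_take_drop hk h (a := 0) (Nat.zero_le _), List.drop_zero, List.dropLast_eq_take]
  rw [Nat.add_sub_assoc (by omega), Nat.add_mod_left, Nat.mod_eq_of_lt (by omega)]
  omega

lemma rhoSub_one (hk : 1 ≤ k) (h : ∀ x ∈ p, x.2 < k) (hp : 2 ≤ p.length) :
    rhoSub k p 1 = p.tail := by
  have hkj := sub_one_mul_add_self hk p.length
  rw [rhoSub_eq_take_drop hk h le_rfl, List.drop_one, List.take_of_length_le (by simp)]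
  rw [Nat.mod_eq_of_lt (by omega)]
  omega

lemma recAux_of_length_le_one (fuel : ℕ) (hp : p.length ≤ 1) :
    RecAux k fuel p = (List.range k).map fun s => colShift k s p := by
  cases fuel <;> simp [RecAux, hp]

lemma head?_getLast?_colShifts (hk : 1 ≤ k) (h : ∀ x ∈ p, x.2 < k) (hp : p.length ≤ 1) :
    ((List.range k).map fun s => colShift k s p).head? = some p ∧
    ((List.range k).map fun s => colShift k s p).getLast? =
      some (colShift k (k - 1) p).reverse := by
  obtain ⟨k, rfl⟩ : ∃ k', k = k' + 1 := ⟨k - 1, by omega⟩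
  refine ⟨by simp [List.range_succ_eq_map, colShift_zero_of_lt h], ?_⟩
  rcases p with _ | ⟨a, _ | ⟨b, p⟩⟩ <;> simp_all [List.range_succ, colShift]

theorem recAux_head?_getLast? (hk : 1 ≤ k) (fuel : ℕ) (p : List (ℕ × ℕ))
    (hfuel : p.length ≤ fuel) (h : ∀ x ∈ p, x.2 < k) :
    (RecAux k fuel p).head? = some p ∧
    (RecAux k fuel p).getLast? = some (colShift k (k - 1) p).reverse := by
  induction fuel generalizing p with
  | zero =>
    have hp1 : p.length ≤ 1 := by omega
    exact recAux_of_length_le_one 0 hp1 ▸ head?_getLast?_colShifts hk h hp1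
  | succ fuel ih =>
    by_cases hp1 : p.length ≤ 1
    · exact recAux_of_length_le_one _ hp1 ▸ head?_getLast?_colShifts hk h hp1
    have hp : p ≠ [] := by rintro rfl; simp at hp1
    have hkj := sub_one_mul_add_self hk p.length
    have hm : k * p.length = (k * p.length - 1) + 1 :=
      (Nat.sub_add_cancel (Nat.mul_pos hk (List.length_pos_of_ne_nil hp))).symm
    rw [RecAux, if_neg hp1, hm]
    constructor
    · apply head?_flatMap_range_reverse
      rw [← hm, rhoSub_mul_length hk h hp, List.head?_map,
        (ih p.dropLast (by rw [List.length_dropLast]; omega) fun x hx => h x (List.dropLast_subset p hx)).1,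
        rho_getD_of_le hk h (by omega),
        show k * p.length - 1 - (k - 1) * p.length = p.length - 1 by omega]
      exact congrArg some (List.dropLast_append_getD_length_sub_one hp _)
    · apply getLast?_flatMap_range_reverse
      rw [rhoSub_one hk h (by omega), List.getLast?_map,
        (ih p.tail (by rw [List.length_tail]; omega) fun x hx => h x (List.mem_of_mem_tail hx)).2,
        colShift_tail, rho_getD_zero hk hp]
      have hq : colShift k (k - 1) p ≠ [] := by simpa [colShift] using hp
      exact congrArg some (List.tail_reverse_append_getD_zero hq _)

end

theorem recList_head_and_getLast_general (n k : ℕ) (hk : 1 ≤ k)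
    (p : List (ℕ × ℕ)) (hp : IsPrePerm n k p) :
    (RecList k p).head? = some p ∧
    (RecList k p).getLast? = some (colShift k (k - 1) p).reverse :=
  recAux_head?_getLast? hk p.length p le_rfl fun x hx => (hp.2 x hx).2

/-- For `n,k ≥ 1` and a pre-perm `p` with `1 ≤ |p| ≤ n`, the first
element of `Rec(p,k)` is `p` and the last element is `rev(p^{+(k-1)})`. -/
theorem recList_head_and_getLast (n k : ℕ) (hn : 1 ≤ n) (hk : 1 ≤ k)
    (p : List (ℕ × ℕ)) (hp : IsPrePerm n k p) (hj1 : 1 ≤ p.length) (hjn : p.length ≤ n) :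
    (RecList k p).head? = some p ∧
    (RecList k p).getLast? = some (colShift k (k - 1) p).reverse :=
  recList_head_and_getLast_general n k hk p hp
end

section
/- For n ≥ 1, k ≥ 1, and any π ∈ CPERMS(n,k), the flip-sequence of the listing Rec(π,k) is σ^k_n: for every i, the (i+1)-st element of Rec(π,k) is obtained from the i-th element by applying flip_{s_i}, where s_1, s_2, … are the successive entries of σ^k_n. -/
/-- The flip sequence `σ^k_n`: `σ^k_1` consists of `k-1` ones and, for `n > 1`,
`σ^k_n = (σ^k_{n-1}, n)` repeated `kn - 1` times followed by one final copy of `σ^k_{n-1}`. -/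
def sigmaSeq (k : ℕ) : ℕ → List ℕ
  | 0 => []
  | 1 => List.replicate (k - 1) 1
  | n + 2 => (List.replicate (k * (n + 2) - 1) (sigmaSeq k (n + 1) ++ [n + 2])).flatten
      ++ sigmaSeq k (n + 1)

namespace RecFlipProof


lemma colShift_length (k s : ℕ) (p : List (ℕ × ℕ)) : (colShift k s p).length = p.length := by
  simp [colShift]

lemma colShift_getD (k s : ℕ) (p : List (ℕ × ℕ)) {r : ℕ} (h : r < p.length) :
    (colShift k s p).getD r (0,0) = ((p[r]).1, ((p[r]).2 + s) % k) := by
  rw [List.getD_eq_getElem _ _ (by simpa [colShift] using h)]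
  simp [colShift]

lemma colShift_getElem (k s : ℕ) (p : List (ℕ × ℕ)) {r : ℕ} (h : r < (colShift k s p).length) :
    (colShift k s p)[r] = ((p[r]'(by simpa [colShift_length] using h)).1,
      ((p[r]'(by simpa [colShift_length] using h)).2 + s) % k) := by
  simp [colShift]

lemma colShift_colShift (k a b : ℕ) (p : List (ℕ × ℕ)) :
    colShift k a (colShift k b p) = colShift k (b + a) p := by
  simp only [colShift, List.map_map]
  congr 1
  funext x
  simp [Function.comp, Nat.mod_add_mod, Nat.add_assoc]

lemma colShift_reverse (k s : ℕ) (p : List (ℕ × ℕ)) :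
    (colShift k s p).reverse = colShift k s p.reverse := by
  simp [colShift]

lemma colShift_cons (k s : ℕ) (a : ℕ × ℕ) (p : List (ℕ × ℕ)) :
    colShift k s (a :: p) = (a.1, (a.2 + s) % k) :: colShift k s p := by
  simp [colShift]

lemma cflip_append_of_le (k s : ℕ) (q r : List (ℕ × ℕ)) (h : s ≤ q.length) :
    cflip k s (q ++ r) = cflip k s q ++ r := by
  rw [cflip, cflip, List.take_append_of_le_length h, List.drop_append_of_le_length h,
    List.append_assoc]

lemma cflip_full (k : ℕ) (q : List (ℕ × ℕ)) : cflip k q.length q = colShift k 1 q.reverse := by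
  simp [cflip]

lemma getD_map_range {α : Type*} (f : ℕ → α) {n t : ℕ} (h : t < n) (d : α) :
    ((List.range n).map f).getD t d = f t := by
  rw [List.getD_eq_getElem _ _ (by simpa using h)]
  simp

lemma getD_map {α β : Type*} (f : α → β) (l : List α) {t : ℕ} (h : t < l.length) (d : β) (d' : α) :
    (l.map f).getD t d = f (l.getD t d') := by
  rw [List.getD_eq_getElem _ _ (by simpa using h), List.getD_eq_getElem _ _ h]
  simp



def rAux (k : ℕ) (p : List (ℕ × ℕ)) (s : ℕ) : List (ℕ × ℕ) :=
  ((List.range s).reverse).flatMap (fun t => colShift k t p)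

lemma rho_def (k : ℕ) (p : List (ℕ × ℕ)) : rho k p = rAux k p k := rfl

lemma rAux_succ (k : ℕ) (p : List (ℕ × ℕ)) (s : ℕ) :
    rAux k p (s + 1) = colShift k s p ++ rAux k p s := by
  simp [rAux, List.range_succ]

lemma rAux_length (k : ℕ) (p : List (ℕ × ℕ)) (s : ℕ) : (rAux k p s).length = s * p.length := by
  induction s with
  | zero => simp [rAux]
  | succ s ih =>
    rw [rAux_succ, List.length_append, colShift_length, ih, Nat.succ_mul]
    omega

lemma rho_length (k : ℕ) (p : List (ℕ × ℕ)) : (rho k p).length = k * p.length := by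
  rw [rho_def, rAux_length]

lemma rAux_getD (k : ℕ) (p : List (ℕ × ℕ)) :
    ∀ (s q r : ℕ), q < s → (hr : r < p.length) →
      (rAux k p s).getD (q * p.length + r) (0,0) = ((p[r]).1, ((p[r]).2 + (s - 1 - q)) % k) := by
  intro s
  induction s with
  | zero => omega
  | succ s ih =>
    intro q r hq hr
    rw [rAux_succ]
    match q with
    | 0 =>
      rw [List.getD_append _ _ _ _ (by rw [colShift_length]; simpa using hr)]
      simpa using colShift_getD k s p hr
    | q + 1 =>
      have h1 : (q + 1) * p.length + r = (colShift k s p).length + (q * p.length + r) := by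
        rw [colShift_length, Nat.succ_mul]; ring
      rw [h1, List.getD_append_right _ _ _ _ (Nat.le_add_right _ _), Nat.add_sub_cancel_left,
        ih q r (by omega) hr]
      have h2 : s - 1 - q = s + 1 - 1 - (q + 1) := by omega
      rw [h2]

lemma rho_getD (k : ℕ) (p : List (ℕ × ℕ)) {q r : ℕ} (hq : q < k) (hr : r < p.length) :
    (rho k p).getD (q * p.length + r) (0,0) = ((p[r]).1, ((p[r]).2 + (k - 1 - q)) % k) := by
  rw [rho_def]; exact rAux_getD k p k q r hq hr

lemma rho_getD_snd_lt (k : ℕ) (p : List (ℕ × ℕ)) (hk : 1 ≤ k) (hp : 1 ≤ p.length) {i : ℕ}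
    (hi : i < k * p.length) : ((rho k p).getD i (0,0)).2 < k := by
  have hd : p.length * (i / p.length) + i % p.length = i := Nat.div_add_mod i p.length
  have hq : i / p.length < k := by
    rw [Nat.div_lt_iff_lt_mul (by omega)]
    exact hi
  have hr : i % p.length < p.length := Nat.mod_lt _ (by omega)
  have := rho_getD k p hq hr
  rw [show i / p.length * p.length + i % p.length = i from by rw [Nat.mul_comm]; exact hd] at this
  rw [this]
  exact Nat.mod_lt _ (by omega)

lemma rho_shift (k : ℕ) (p : List (ℕ × ℕ)) (hk : 1 ≤ k) (hp : 1 ≤ p.length) (u : ℕ) :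
    (rho k p).getD (u % (k * p.length)) (0,0) =
      (fun x => (x.1, (x.2 + 1) % k)) ((rho k p).getD ((u + p.length) % (k * p.length)) (0,0)) := by
  set j := p.length with hj
  set m := k * j with hm
  have hjm : j ≤ m := Nat.le_mul_of_pos_left _ (by omega)
  have hm0 : 0 < m := by omega
  set a := u % m with ha
  have haM : a < m := Nat.mod_lt _ hm0
  set q := a / j with hqdef
  set r := a % j with hrdef
  have hqr : q * j + r = a := by
    rw [hqdef, hrdef, Nat.mul_comm]
    exact Nat.div_add_mod a j
  have hr : r < j := Nat.mod_lt _ (by omega)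
  have hq : q < k := by
    rw [hqdef, Nat.div_lt_iff_lt_mul (by omega)]
    exact haM

  have hu2 : (u + j) % m = (a + j) % m := by
    conv_lhs => rw [← Nat.mod_add_mod]
  rcases Nat.lt_or_ge q (k - 1) with h | h
  · have e1 : (q + 2) * j ≤ k * j := Nat.mul_le_mul_right j (by omega)
    have e2 : a + j = (q + 1) * j + r := by rw [← hqr]; ring
    have e3 : (a + j) % m = (q + 1) * j + r := by
      rw [e2, Nat.mod_eq_of_lt (by rw [hm]; nlinarith [e1])]
    rw [hu2, e3, rho_getD k p (show q + 1 < k by omega) hr, ← hqr,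
      rho_getD k p hq hr]
    simp only [Nat.mod_add_mod]
    have : (p[r]).2 + (k - 1 - (q + 1)) + 1 = (p[r]).2 + (k - 1 - q) := by omega
    rw [this]
  · have hq1 : q = k - 1 := by omega
    have e4 : a + j = m + r := by
      have hk1 : k - 1 + 1 = k := by omega
      have h5 : q * j = (k - 1) * j := by rw [hq1]
      have h6 : (k - 1) * j + j = k * j := by
        calc (k - 1) * j + j = ((k - 1) + 1) * j := by ring
        _ = k * j := by rw [hk1]
      omega
    have e5 : (a + j) % m = r := by
      rw [e4, Nat.add_mod_left, Nat.mod_eq_of_lt (by omega)]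
    have h0 : (rho k p).getD r (0,0) = ((p[r]).1, ((p[r]).2 + (k - 1)) % k) := by
      have := rho_getD k p (show 0 < k by omega) hr
      simpa using this
    rw [hu2, e5, h0, ← hqr, rho_getD k p hq hr, hq1]
    simp only [Nat.mod_add_mod, Nat.sub_self]
    have : (p[r]).2 + (k - 1) + 1 = (p[r]).2 + k := by omega
    rw [this, Nat.add_mod_right]
    simp

lemma rhoSub_length (k : ℕ) (p : List (ℕ × ℕ)) (i : ℕ) :
    (rhoSub k p i).length = p.length - 1 := by simp [rhoSub]

lemma rhoSub_getElem (k : ℕ) (p : List (ℕ × ℕ)) (i : ℕ) {t : ℕ}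
    (h : t < (rhoSub k p i).length) :
    (rhoSub k p i)[t] =
      (rho k p).getD ((i + t + k * p.length - p.length) % (k * p.length)) (0, 0) := by
  simp [rhoSub]




lemma flatten_replicate_length {α : Type*} (c : ℕ) (blk : List α) :
    (List.replicate c blk).flatten.length = c * blk.length := by
  induction c with
  | zero => simp
  | succ c ih => rw [List.replicate_succ, List.flatten_cons, List.length_append, ih, Nat.succ_mul]; omega

lemma flatten_replicate_getD {α : Type*} (blk : List α) (d : α) :
    ∀ c b t, b < c → t < blk.length →
      (List.replicate c blk).flatten.getD (b * blk.length + t) d = blk.getD t d := by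
  intro c
  induction c with
  | zero => omega
  | succ c ih =>
    intro b t hb ht
    rw [List.replicate_succ, List.flatten_cons]
    match b with
    | 0 =>
      rw [List.getD_append _ _ _ _ (by simpa using ht)]
      simp
    | b + 1 =>
      have h1 : (b + 1) * blk.length + t = blk.length + (b * blk.length + t) := by
        rw [Nat.succ_mul]; ring
      rw [h1, List.getD_append_right _ _ _ _ (Nat.le_add_right _ _), Nat.add_sub_cancel_left]
      exact ih b t (by omega) ht

lemma sigma_append (k n : ℕ) (hk : 1 ≤ k) :
    sigmaSeq k (n + 2) ++ [n + 2] =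
      (List.replicate (k * (n + 2)) (sigmaSeq k (n + 1) ++ [n + 2])).flatten := by
  have hm : 1 ≤ k * (n + 2) := Nat.one_le_iff_ne_zero.mpr (by positivity)
  conv_rhs => rw [show k * (n + 2) = (k * (n + 2) - 1) + 1 by omega]
  rw [List.replicate_succ', List.flatten_append]
  show sigmaSeq k (n+2) ++ [n+2] = _
  rw [show sigmaSeq k (n + 2) =
    (List.replicate (k * (n + 2) - 1) (sigmaSeq k (n + 1) ++ [n + 2])).flatten
      ++ sigmaSeq k (n + 1) from rfl]
  simp [List.append_assoc]

lemma sigma_length (k n : ℕ) (hk : 1 ≤ k) :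
    (sigmaSeq k (n + 2)).length + 1 = k * (n + 2) * ((sigmaSeq k (n + 1)).length + 1) := by
  have h := congrArg List.length (sigma_append k n hk)
  rw [List.length_append, flatten_replicate_length, List.length_append] at h
  simpa using h

lemma sigma_mem_le (k : ℕ) : ∀ n, ∀ x ∈ sigmaSeq k n, x ≤ n := by
  intro n
  induction n with
  | zero => intro x hx; simp [sigmaSeq] at hx
  | succ n ih =>
    match n, ih with
    | 0, _ =>
      intro x hx
      rw [show sigmaSeq k 1 = List.replicate (k-1) 1 from rfl] at hx
      rcases List.mem_replicate.mp hx with ⟨_, rfl⟩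
      omega
    | n + 1, ih =>
      intro x hx
      rw [show sigmaSeq k (n + 2) =
        (List.replicate (k * (n + 2) - 1) (sigmaSeq k (n + 1) ++ [n + 2])).flatten
          ++ sigmaSeq k (n + 1) from rfl] at hx
      rcases List.mem_append.mp hx with h | h
      · rcases List.mem_flatten.mp h with ⟨l, hl, hxl⟩
        rcases List.mem_replicate.mp hl with ⟨_, rfl⟩
        rcases List.mem_append.mp hxl with h2 | h2
        · have := ih x h2; omega
        · simp at h2; omega
      · have := ih x h; omega

lemma revRange_flatMap_length {β : Type*} (f : ℕ → List β) (ℓ : ℕ) :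
    ∀ m, (∀ i < m, (f i).length = ℓ) →
      (((List.range m).reverse).flatMap f).length = m * ℓ := by
  intro m
  induction m with
  | zero => simp
  | succ m ih =>
    intro hf
    have hrw : ((List.range (m + 1)).reverse).flatMap f
        = f m ++ ((List.range m).reverse).flatMap f := by
      simp [List.range_succ]
    rw [hrw, List.length_append, hf m (by omega), ih (fun i hi => hf i (by omega)), Nat.succ_mul]
    omega

lemma revRange_flatMap_getD {β : Type*} (f : ℕ → List β) (d : β) (ℓ : ℕ) :
    ∀ m, (∀ i < m, (f i).length = ℓ) → ∀ b t, b < m → t < ℓ →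
      (((List.range m).reverse).flatMap f).getD (b * ℓ + t) d = (f (m - 1 - b)).getD t d := by
  intro m
  induction m with
  | zero => omega
  | succ m ih =>
    intro hf b t hb ht
    have hrw : ((List.range (m + 1)).reverse).flatMap f
        = f m ++ ((List.range m).reverse).flatMap f := by
      simp [List.range_succ]
    rw [hrw]
    match b with
    | 0 =>
      rw [List.getD_append _ _ _ _ (by rw [hf m (by omega)]; simpa using ht)]
      simp
    | b + 1 =>
      have h1 : (b + 1) * ℓ + t = (f m).length + (b * ℓ + t) := by
        rw [hf m (by omega), Nat.succ_mul]; ring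
      rw [h1, List.getD_append_right _ _ _ _ (Nat.le_add_right _ _), Nat.add_sub_cancel_left,
        ih (fun i hi => hf i (by omega)) b t (by omega) ht]
      have h2 : m - 1 - b = m + 1 - 1 - (b + 1) := by omega
      rw [h2]



lemma mul_sub_one_helper (k J : ℕ) (hk : 1 ≤ k) : (k - 1) * J + J = k * J := by
  have hk1 : k - 1 + 1 = k := by omega
  calc (k - 1) * J + J = ((k - 1) + 1) * J := by ring
  _ = k * J := by rw [hk1]

lemma first_eq (k : ℕ) (p : List (ℕ × ℕ)) (hk : 1 ≤ k) (hp : 1 ≤ p.length) :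
    colShift k 0 (rhoSub k p (k * p.length)) ++ [(rho k p).getD (k * p.length - 1) (0,0)]
      = colShift k 0 p := by
  have hJm : p.length ≤ k * p.length := Nat.le_mul_of_pos_left _ (by omega)
  have e1 : (k - 1) * p.length + p.length = k * p.length := mul_sub_one_helper k p.length hk
  apply List.ext_getElem
  · simp only [List.length_append, colShift_length, rhoSub_length, List.length_singleton]
    omega
  intro s h1 h2
  rw [colShift_length] at h2
  rcases Nat.lt_or_ge s (p.length - 1) with hs | hs
  · rw [List.getElem_append_left (by
      simp only [colShift_length, rhoSub_length]; omega)]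
    simp only [colShift, rhoSub, List.getElem_map, List.getElem_range]
    have e2 : k * p.length + s + k * p.length - p.length = ((k - 1) * p.length + s)
        + k * p.length := by omega
    rw [e2, Nat.add_mod_right, Nat.mod_eq_of_lt (by omega),
      rho_getD k p (show k - 1 < k by omega) h2]
    simp
  · have hs1 : s = p.length - 1 := by omega
    subst hs1
    rw [List.getElem_append_right (by
      simp only [colShift_length, rhoSub_length]; omega)]
    simp only [colShift_length, rhoSub_length, colShift, List.getElem_map,
      List.length_map, List.length_range]
    simp only [show p.length - 1 - (p.length - 1) = 0 from by omega, List.getElem_singleton]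
    have e4 : k * p.length - 1 = (k - 1) * p.length + (p.length - 1) := by omega
    rw [e4, rho_getD k p (show k - 1 < k by omega) (by omega)]
    simp only [show k - 1 - (k - 1) = 0 from by omega]

lemma last_eq (k : ℕ) (p : List (ℕ × ℕ)) (hk : 1 ≤ k) (hp : 1 ≤ p.length) :
    colShift k (k - 1) (rhoSub k p 1).reverse ++ [(rho k p).getD 0 (0,0)]
      = colShift k (k - 1) p.reverse := by
  have hJm : p.length ≤ k * p.length := Nat.le_mul_of_pos_left _ (by omega)
  have e1 : (k - 1) * p.length + p.length = k * p.length := mul_sub_one_helper k p.length hk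
  apply List.ext_getElem
  · simp only [List.length_append, colShift_length, rhoSub_length, List.length_singleton,
      List.length_reverse]
    omega
  intro s h1 h2
  rw [colShift_length, List.length_reverse] at h2
  rcases Nat.lt_or_ge s (p.length - 1) with hs | hs
  · rw [List.getElem_append_left (by
      simp only [colShift_length, rhoSub_length, List.length_reverse]; omega)]
    simp only [colShift, rhoSub, List.getElem_map, List.getElem_reverse, List.length_reverse,
      List.length_map, List.length_range, List.getElem_range]
    have e2 : 1 + (p.length - 1 - 1 - s) + k * p.length - p.length
        = (k - 1) * p.length + (p.length - 1 - s) := by omega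
    rw [e2, Nat.mod_eq_of_lt (by omega),
      rho_getD k p (show k - 1 < k by omega) (by omega)]
    simp only [show k - 1 - (k - 1) = 0 from by omega]
    simp [Nat.mod_add_mod]
  · have hs1 : s = p.length - 1 := by omega
    rw [List.getElem_append_right (by
      simp only [colShift_length, rhoSub_length, List.length_reverse]; omega)]
    simp only [colShift_length, List.length_reverse, rhoSub_length]
    simp only [show s - (p.length - 1) = 0 from by omega, List.getElem_singleton]
    have h0 : (rho k p).getD 0 (0,0) = ((p[0]'(by omega)).1, ((p[0]'(by omega)).2 + (k - 1)) % k) := by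
      have := rho_getD k p (q := 0) (r := 0) (show 0 < k by omega) (show 0 < p.length by omega)
      simpa using this
    rw [h0]
    simp only [colShift, List.getElem_map, List.getElem_reverse, List.length_reverse]
    simp only [show p.length - 1 - s = 0 from by omega]

lemma boundary_eq (k : ℕ) (p : List (ℕ × ℕ)) (hk : 1 ≤ k) (hp : 2 ≤ p.length)
    (u : ℕ) (hu1 : 1 ≤ u) (hu2 : u < k * p.length) :
    cflip k p.length
        (colShift k (k - 1) (rhoSub k p (u + 1)).reverse ++ [(rho k p).getD u (0,0)])
      = colShift k 0 (rhoSub k p u) ++ [(rho k p).getD (u - 1) (0,0)] := by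
  have hJm : p.length ≤ k * p.length := Nat.le_mul_of_pos_left _ (by omega)
  have e1 : (k - 1) * p.length + p.length = k * p.length := mul_sub_one_helper k p.length hk
  have hXlen : (colShift k (k - 1) (rhoSub k p (u + 1)).reverse
      ++ [(rho k p).getD u (0,0)]).length = p.length := by
    simp only [List.length_append, colShift_length, rhoSub_length, List.length_singleton,
      List.length_reverse]
    omega
  have hcf := cflip_full k (colShift k (k - 1) (rhoSub k p (u + 1)).reverse
      ++ [(rho k p).getD u (0,0)])
  rw [hXlen] at hcf
  rw [hcf, List.reverse_append, List.reverse_singleton, List.singleton_append,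
    colShift_reverse, List.reverse_reverse, colShift_cons, colShift_colShift]
  apply List.ext_getElem
  · simp only [List.length_cons, List.length_append, colShift_length, rhoSub_length,
      List.length_singleton, List.length_nil] <;> omega
  intro s h1 h2
  have hlen1 : s < p.length := by
    simp only [List.length_cons, colShift_length, rhoSub_length] at h1; omega
  rcases s with _ | s
  · rw [List.getElem_cons_zero,
      List.getElem_append_left (by simp only [colShift_length, rhoSub_length]; omega)]
    simp only [colShift, rhoSub, List.getElem_map, List.getElem_range]
    simp only [Nat.add_zero]
    have hshift := rho_shift k p hk (by omega) (u + k * p.length - p.length)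
    rw [show u + k * p.length - p.length + p.length = u + k * p.length from by omega,
      Nat.add_mod_right, Nat.mod_eq_of_lt hu2] at hshift
    rw [hshift]
    simp
  · rw [List.getElem_cons_succ]
    simp only [colShift, rhoSub, List.getElem_map, List.getElem_range]
    rcases Nat.lt_or_ge (s + 1) (p.length - 1) with hs | hs
    · rw [List.getElem_append_left (by
        simp only [List.length_map, List.length_range]; omega)]
      simp only [colShift, rhoSub, List.getElem_map, List.getElem_range]
      simp only [show u + 1 + s + k * p.length - p.length
          = u + (s + 1) + k * p.length - p.length from by omega,
        show k - 1 + 1 = k from by omega]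
      rcases h : (rho k p).getD ((u + (s + 1) + k * p.length - p.length) % (k * p.length)) (0,0)
        with ⟨v, c⟩
      simp [Nat.add_mod_right]
    · have hs1 : s + 1 = p.length - 1 := by omega
      rw [List.getElem_append_right (by
        simp only [List.length_map, List.length_range]; omega)]
      simp only [List.length_map, List.length_range]
      simp only [show s + 1 - (p.length - 1) = 0 from by omega, List.getElem_singleton]
      simp only [show u + 1 + s + k * p.length - p.length = (u - 1) + k * p.length from by omega,
        Nat.add_mod_right, Nat.mod_eq_of_lt (show u - 1 < k * p.length from by omega),
        show k - 1 + 1 = k from by omega]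
      have hc := rho_getD_snd_lt k p hk (by omega) (show u - 1 < k * p.length from by omega)
      rcases h : (rho k p).getD (u - 1) (0,0) with ⟨v, c⟩
      rw [h] at hc
      simp only [Nat.add_mod_right]
      rw [Nat.mod_eq_of_lt hc]



lemma main_induction (k : ℕ) (hk : 1 ≤ k) :
    ∀ j, 1 ≤ j → ∀ p : List (ℕ × ℕ), p.length = j →
      (RecList k p).length = (sigmaSeq k j).length + 1 ∧
      (∀ t, t ≤ (sigmaSeq k j).length → ((RecList k p).getD t []).length = j) ∧
      (RecList k p).getD 0 [] = colShift k 0 p ∧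
      (RecList k p).getD (sigmaSeq k j).length [] = colShift k (k - 1) p.reverse ∧
      (∀ i, i < (sigmaSeq k j).length →
        (RecList k p).getD (i + 1) [] =
          cflip k ((sigmaSeq k j).getD i 0) ((RecList k p).getD i [])) := by
  intro j
  induction j with
  | zero => intro h; omega
  | succ j ih =>
    match j, ih with
    | 0, _ =>
      intro _ p hp
      obtain ⟨a, rfl⟩ := List.length_eq_one_iff.mp hp
      have hR : RecList k [a] = (List.range k).map (fun s => colShift k s [a]) := by
        simp [RecList, RecAux]
      have hσ : sigmaSeq k 1 = List.replicate (k - 1) 1 := rfl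
      refine ⟨?_, ?_, ?_, ?_, ?_⟩
      · rw [hR, hσ]
        simp only [List.length_map, List.length_range, List.length_replicate]
        omega
      · intro t ht
        rw [hσ, List.length_replicate] at ht
        rw [hR, getD_map_range _ (show t < k by omega)]
        simp [colShift_length]
      · rw [hR, getD_map_range _ (show 0 < k by omega)]
      · rw [hR, hσ, List.length_replicate, getD_map_range _ (show k - 1 < k by omega)]
        simp
      · intro i hi
        rw [hσ, List.length_replicate] at hi
        rw [hR, getD_map_range _ (show i + 1 < k by omega),
          getD_map_range _ (show i < k by omega), hσ]
        rw [List.getD_eq_getElem _ _ (by simpa using hi), List.getElem_replicate]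
        show colShift k (i + 1) [a] = cflip k 1 (colShift k i [a])
        simp [cflip, colShift, Nat.mod_add_mod, Nat.add_assoc]
    | j + 1, ih =>
      intro _ p hp
      replace hp : p.length = j + 2 := by omega
      rw [show j + 1 + 1 = j + 2 from by omega]
      have hk2 : 2 ≤ p.length := by omega
      have hmp : k * p.length = k * (j + 2) := by rw [hp]
      have hmpos : 0 < k * (j + 2) := Nat.mul_pos (by omega) (by omega)
      have hmJ : p.length ≤ k * p.length := Nat.le_mul_of_pos_left _ (by omega)
      have IH : ∀ i' : ℕ,
          (RecList k (rhoSub k p i')).length = (sigmaSeq k (j + 1)).length + 1 ∧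
          (∀ t, t ≤ (sigmaSeq k (j + 1)).length →
            ((RecList k (rhoSub k p i')).getD t []).length = j + 1) ∧
          (RecList k (rhoSub k p i')).getD 0 [] = colShift k 0 (rhoSub k p i') ∧
          (RecList k (rhoSub k p i')).getD (sigmaSeq k (j + 1)).length []
            = colShift k (k - 1) (rhoSub k p i').reverse ∧
          (∀ i, i < (sigmaSeq k (j + 1)).length →
            (RecList k (rhoSub k p i')).getD (i + 1) [] =
              cflip k ((sigmaSeq k (j + 1)).getD i 0)
                ((RecList k (rhoSub k p i')).getD i [])) :=
        fun i' => ih (by omega) (rhoSub k p i') (by rw [rhoSub_length, hp]; omega)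

      have hR : RecList k p = ((List.range (k * p.length)).reverse).flatMap
          (fun i => (RecList k (rhoSub k p (i + 1))).map
            (fun q => q ++ [(rho k p).getD i (0, 0)])) := by
        have h1 : RecList k p = RecAux k (j + 2) p := by rw [RecList, hp]
        have h2 : RecAux k (j + 2) p =
            if p.length ≤ 1 then (List.range k).map (fun s => colShift k s p)
            else ((List.range (k * p.length)).reverse).flatMap
              (fun i => (RecAux k (j + 1) (rhoSub k p (i + 1))).map
                (fun q => q ++ [(rho k p).getD i (0, 0)])) := rfl
        have h3 : ∀ i' : ℕ, RecAux k (j + 1) (rhoSub k p i') = RecList k (rhoSub k p i') :=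
          fun i' => by
            have hps : (rhoSub k p i').length = j + 1 := by rw [rhoSub_length, hp]; omega
            rw [RecList, hps]
        rw [h1, h2, if_neg (by omega)]
        simp only [h3]
      have hFlen : ∀ i, i < k * p.length →
          ((RecList k (rhoSub k p (i + 1))).map
            (fun q => q ++ [(rho k p).getD i (0, 0)])).length
          = (sigmaSeq k (j + 1)).length + 1 := by
        intro i _
        rw [List.length_map]
        exact (IH (i + 1)).1
      have hRlen : (RecList k p).length = (k * p.length) * ((sigmaSeq k (j + 1)).length + 1) := by
        rw [hR]
        exact revRange_flatMap_length _ _ _ hFlen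
      rw [hmp] at hRlen
      have hσlen : (sigmaSeq k (j + 2)).length + 1
          = k * (j + 2) * ((sigmaSeq k (j + 1)).length + 1) := sigma_length k j hk
      have hblock : ∀ b t, b < k * p.length → t < (sigmaSeq k (j + 1)).length + 1 →
          (RecList k p).getD (b * ((sigmaSeq k (j + 1)).length + 1) + t) [] =
            ((RecList k (rhoSub k p (k * p.length - b))).getD t [])
              ++ [(rho k p).getD (k * p.length - 1 - b) (0, 0)] := by
        intro b t hb ht
        rw [hR, revRange_flatMap_getD _ _ _ _ hFlen b t hb ht,
          getD_map _ _ (by rw [(IH _).1]; exact ht) [] [],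
          show k * p.length - 1 - b + 1 = k * p.length - b from by omega]
      have hblk_len : (sigmaSeq k (j + 1) ++ [j + 2]).length
          = (sigmaSeq k (j + 1)).length + 1 := by simp
      have hσget : ∀ b t, t < (sigmaSeq k (j + 1)).length + 1 →
          b * ((sigmaSeq k (j + 1)).length + 1) + t < (sigmaSeq k (j + 2)).length →
          (sigmaSeq k (j + 2)).getD (b * ((sigmaSeq k (j + 1)).length + 1) + t) 0
            = (sigmaSeq k (j + 1) ++ [j + 2]).getD t 0 := by
        intro b t ht hbt
        have h1 : (sigmaSeq k (j + 2)).getD (b * ((sigmaSeq k (j + 1)).length + 1) + t) 0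
            = (sigmaSeq k (j + 2) ++ [j + 2]).getD
                (b * ((sigmaSeq k (j + 1)).length + 1) + t) 0 :=
          (List.getD_append _ _ _ _ hbt).symm
        rw [h1, sigma_append k j hk]
        have hb : b < k * (j + 2) := by
          by_contra h
          push_neg at h
          have h5 := Nat.mul_le_mul_right ((sigmaSeq k (j + 1)).length + 1) h
          omega
        have h6 := flatten_replicate_getD (sigmaSeq k (j + 1) ++ [j + 2]) 0 (k * (j + 2)) b t hb
          (by rw [hblk_len]; exact ht)
        rw [hblk_len] at h6
        exact h6
      refine ⟨?_, ?_, ?_, ?_, ?_⟩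
      · omega
      · intro t0 ht0
        obtain ⟨b, t, ht, heq⟩ : ∃ b t, t < (sigmaSeq k (j + 1)).length + 1 ∧
            b * ((sigmaSeq k (j + 1)).length + 1) + t = t0 :=
          ⟨t0 / ((sigmaSeq k (j + 1)).length + 1), t0 % ((sigmaSeq k (j + 1)).length + 1),
            Nat.mod_lt _ (by omega), by rw [Nat.mul_comm]; exact Nat.div_add_mod _ _⟩
        have hb : b < k * (j + 2) := by
          by_contra h
          push_neg at h
          have h5 := Nat.mul_le_mul_right ((sigmaSeq k (j + 1)).length + 1) h
          omega
        rw [← heq, hblock b t (by omega) ht, List.length_append,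
          (IH (k * p.length - b)).2.1 t (by omega)]
        simp
      · have h0 := hblock 0 0 (by omega) (by omega)
        simp only [Nat.zero_mul, Nat.add_zero, Nat.zero_add, Nat.sub_zero] at h0
        rw [h0, (IH (k * p.length)).2.2.1]
        exact first_eq k p hk (by omega)
      · have hidx : (sigmaSeq k (j + 2)).length
            = (k * (j + 2) - 1) * ((sigmaSeq k (j + 1)).length + 1)
              + (sigmaSeq k (j + 1)).length := by
          have h6 := mul_sub_one_helper (k * (j + 2)) ((sigmaSeq k (j + 1)).length + 1)
            (by omega)
          omega
        rw [hidx, hblock _ _ (by omega) (by omega),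
          show k * p.length - (k * (j + 2) - 1) = 1 from by omega,
          show k * p.length - 1 - (k * (j + 2) - 1) = 0 from by omega,
          (IH 1).2.2.2.1]
        exact last_eq k p hk (by omega)
      · intro i hi
        obtain ⟨b, t, ht, heq⟩ : ∃ b t, t < (sigmaSeq k (j + 1)).length + 1 ∧
            b * ((sigmaSeq k (j + 1)).length + 1) + t = i :=
          ⟨i / ((sigmaSeq k (j + 1)).length + 1), i % ((sigmaSeq k (j + 1)).length + 1),
            Nat.mod_lt _ (by omega), by rw [Nat.mul_comm]; exact Nat.div_add_mod _ _⟩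
        have hb : b < k * (j + 2) := by
          by_contra h
          push_neg at h
          have h5 := Nat.mul_le_mul_right ((sigmaSeq k (j + 1)).length + 1) h
          omega
        rcases Nat.lt_or_ge (t + 1) ((sigmaSeq k (j + 1)).length + 1) with hcase | hcase
        · rw [← heq,
            show b * ((sigmaSeq k (j + 1)).length + 1) + t + 1
              = b * ((sigmaSeq k (j + 1)).length + 1) + (t + 1) from by omega,
            hblock b (t + 1) (by omega) (by omega), hblock b t (by omega) (by omega),
            hσget b t (by omega) (by omega),
            List.getD_append _ _ _ _ (show t < (sigmaSeq k (j + 1)).length by omega)]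
          have hs_le : (sigmaSeq k (j + 1)).getD t 0 ≤ j + 1 := by
            rw [List.getD_eq_getElem _ _ (by omega)]
            exact sigma_mem_le k (j + 1) _ (List.getElem_mem _)
          rw [cflip_append_of_le _ _ _ _
              (by rw [(IH (k * p.length - b)).2.1 t (by omega)]; omega),
            (IH (k * p.length - b)).2.2.2.2 t (by omega)]
        · have ht1 : t = (sigmaSeq k (j + 1)).length := by omega
          have hb1 : b + 1 < k * (j + 2) := by
            by_contra h
            push_neg at h
            have h7 := Nat.mul_le_mul_right ((sigmaSeq k (j + 1)).length + 1) h
            have h8 : (b + 1) * ((sigmaSeq k (j + 1)).length + 1)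
                = b * ((sigmaSeq k (j + 1)).length + 1) + ((sigmaSeq k (j + 1)).length + 1) :=
              Nat.succ_mul _ _
            omega
          have heq2 : i + 1 = (b + 1) * ((sigmaSeq k (j + 1)).length + 1) + 0 := by
            have h8 : (b + 1) * ((sigmaSeq k (j + 1)).length + 1)
                = b * ((sigmaSeq k (j + 1)).length + 1) + ((sigmaSeq k (j + 1)).length + 1) :=
              Nat.succ_mul _ _
            omega
          rw [heq2, ← heq,
            hblock (b + 1) 0 (by omega) (by omega), hblock b t (by omega) (by omega),
            hσget b t (by omega) (by omega),
            List.getD_append_right _ _ _ _ (show (sigmaSeq k (j + 1)).length ≤ t by omega),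
            show t - (sigmaSeq k (j + 1)).length = 0 from by omega,
            List.getD_cons_zero,
            (IH (k * p.length - (b + 1))).2.2.1, ht1,
            (IH (k * p.length - b)).2.2.2.1]
          have hu1 : 1 ≤ k * p.length - 1 - b := by omega
          have hu2 : k * p.length - 1 - b < k * p.length := by omega
          have hbd := boundary_eq k p hk hk2 (k * p.length - 1 - b) hu1 hu2
          rw [show (j + 2 : ℕ) = p.length from hp.symm,
            show k * p.length - b = k * p.length - 1 - b + 1 from by omega,
            show k * p.length - (b + 1) = k * p.length - 1 - b from by omega,
            show k * p.length - 1 - (b + 1) = k * p.length - 1 - b - 1 from by omega]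
          exact hbd.symm


end RecFlipProof

/-- For `n,k ≥ 1` and `π ∈ CPERMS(n,k)`, the flip-sequence of the
listing `Rec(π,k)` is `σ^k_n`: the listing has one more entry than `σ^k_n`, and for
every `i`, its `(i+1)`-st element is obtained from its `i`-th element by a flip whose
length is the `i`-th entry of `σ^k_n`. -/
theorem recList_flipSeq (n k : ℕ) (hn : 1 ≤ n) (hk : 1 ≤ k)
    (π : List (ℕ × ℕ)) (hπ : IsCPerm n k π) :
    (RecList k π).length = (sigmaSeq k n).length + 1 ∧
    ∀ i < (sigmaSeq k n).length,
      (RecList k π).getD (i + 1) [] =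
        cflip k ((sigmaSeq k n).getD i 0) ((RecList k π).getD i []) := by
  have hlen : π.length = n := by
    have h := hπ.1.length_eq
    simpa using h
  obtain ⟨h1, _, _, _, h5⟩ := RecFlipProof.main_induction k hk n hn π hlen
  exact ⟨h1, h5⟩
end

section
/- For all n ≥ 1 and k ≥ 1, the greedy min-flip sequence does not get stuck before producing all k^n·n! coloured permutations, and the sequence of flip lengths it uses is exactly σ^k_n: for every 1 ≤ i ≤ k^n·n! − 1, the step from G_{i−1} to G_i uses a flip of length equal to the i-th entry of σ^k_n. -/
/-- One-step-at-a-time greedy min-flip construction: `greedyList n k t` is the list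
`G_0, G_1, …` after `t` attempted extensions, starting at `G_0 = 1⁰2⁰⋯n⁰` and extending
by the smallest flip length `j ∈ {1,…,n}` leading to a permutation not yet in the list
(the list stops growing when no such `j` exists). -/
def greedyList (n k : ℕ) : ℕ → List (List (ℕ × ℕ))
  | 0 => [idPerm n]
  | t + 1 =>
    let L := greedyList n k t
    match ((List.range n).map (· + 1)).find? (fun j => decide (cflip k j (L.getLastD []) ∉ L)) with
    | some j => L ++ [cflip k j (L.getLastD [])]
    | none => L

namespace ColouredFlip

open List

lemma exists_eq_append_singleton {α : Type*} {l : List α} {n : ℕ} (h : l.length = n + 1) :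
    ∃ u x, l = u ++ [x] ∧ u.length = n := by
  rcases eq_nil_or_concat' l with rfl | ⟨u, x, rfl⟩
  · simp at h
  · exact ⟨u, x, rfl, by simpa using h⟩

def ColoursBelow (k : ℕ) (p : List (ℕ × ℕ)) : Prop := ∀ x ∈ p, x.2 < k

section Colours

variable {k : ℕ}

lemma colShift_colShift (s t : ℕ) (p : List (ℕ × ℕ)) :
    colShift k s (colShift k t p) = colShift k (t + s) p := by
  simp [colShift, Nat.add_assoc]

lemma colShift_eq_self {s : ℕ} (hs : s % k = 0) {p : List (ℕ × ℕ)} (hp : ColoursBelow k p) :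
    colShift k s p = p := by
  refine (map_congr_left fun x hx => ?_).trans (map_id p)
  simp [Nat.add_mod, hs, Nat.mod_eq_of_lt (hp x hx)]

lemma colShift_append (s : ℕ) (p q : List (ℕ × ℕ)) :
    colShift k s (p ++ q) = colShift k s p ++ colShift k s q :=
  map_append

lemma colShift_reverse (s : ℕ) (p : List (ℕ × ℕ)) :
    colShift k s p.reverse = (colShift k s p).reverse :=
  map_reverse

@[simp] lemma length_colShift (s : ℕ) (p : List (ℕ × ℕ)) : (colShift k s p).length = p.length :=
  length_map _

lemma map_fst_colShift (s : ℕ) (p : List (ℕ × ℕ)) :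
    (colShift k s p).map Prod.fst = p.map Prod.fst := by
  simp [colShift]

lemma coloursBelow_colShift (hk : 0 < k) (s : ℕ) (p : List (ℕ × ℕ)) :
    ColoursBelow k (colShift k s p) := by
  simp only [ColoursBelow, colShift, mem_map]
  rintro _ ⟨x, -, rfl⟩
  exact Nat.mod_lt _ hk

lemma ColoursBelow.of_sublist {p q : List (ℕ × ℕ)} (hpq : q.Sublist p) (hp : ColoursBelow k p) :
    ColoursBelow k q :=
  fun x hx => hp x (hpq.mem hx)

end Colours

section Flips

variable {k : ℕ}

lemma length_cflip {j : ℕ} {p : List (ℕ × ℕ)} (h : j ≤ p.length) :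
    (cflip k j p).length = p.length := by
  simp only [cflip, length_append, length_colShift, length_reverse, length_take, length_drop]
  omega

lemma cflip_length_self (p : List (ℕ × ℕ)) : cflip k p.length p = colShift k 1 p.reverse := by
  simp [cflip]

lemma cflip_append_of_le_length {j : ℕ} {u : List (ℕ × ℕ)} (h : j ≤ u.length)
    (v : List (ℕ × ℕ)) : cflip k j (u ++ v) = cflip k j u ++ v := by
  simp [cflip, take_append_of_le_length h, drop_append_of_le_length h]

lemma map_fst_cflip_perm (j : ℕ) (p : List (ℕ × ℕ)) :
    ((cflip k j p).map Prod.fst).Perm (p.map Prod.fst) := by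
  conv_rhs => rw [← take_append_drop j p]
  simp only [cflip, map_append, map_fst_colShift]
  exact ((reverse_perm _).map _).append_right _

lemma coloursBelow_cflip (hk : 0 < k) (j : ℕ) {p : List (ℕ × ℕ)} (hp : ColoursBelow k p) :
    ColoursBelow k (cflip k j p) := by
  intro x hx
  rcases mem_append.1 hx with hx | hx
  · exact coloursBelow_colShift hk 1 _ x hx
  · exact hp x (mem_of_mem_drop hx)

end Flips

def flipChain (k : ℕ) (σ : List ℕ) (p : List (ℕ × ℕ)) : List (List (ℕ × ℕ)) :=
  σ.scanl (fun q j => cflip k j q) p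

def flipRun (k : ℕ) (σ : List ℕ) (p : List (ℕ × ℕ)) : List (ℕ × ℕ) :=
  σ.foldl (fun q j => cflip k j q) p

section Chains

variable {k : ℕ}

@[simp] lemma flipChain_nil (p : List (ℕ × ℕ)) : flipChain k [] p = [p] := rfl

@[simp] lemma flipChain_cons (j : ℕ) (σ : List ℕ) (p : List (ℕ × ℕ)) :
    flipChain k (j :: σ) p = p :: flipChain k σ (cflip k j p) := by
  simp [flipChain, scanl_cons]

@[simp] lemma flipRun_nil (p : List (ℕ × ℕ)) : flipRun k [] p = p := rfl

@[simp] lemma flipRun_cons (j : ℕ) (σ : List ℕ) (p : List (ℕ × ℕ)) :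
    flipRun k (j :: σ) p = flipRun k σ (cflip k j p) := rfl

@[simp] lemma length_flipChain (σ : List ℕ) (p : List (ℕ × ℕ)) :
    (flipChain k σ p).length = σ.length + 1 :=
  length_scanl

lemma mem_flipChain_self (σ : List ℕ) (p : List (ℕ × ℕ)) : p ∈ flipChain k σ p := by
  cases σ <;> simp

lemma flipRun_append (σ τ : List ℕ) (p : List (ℕ × ℕ)) :
    flipRun k (σ ++ τ) p = flipRun k τ (flipRun k σ p) :=
  foldl_append

lemma flipChain_append_cons (σ : List ℕ) (j : ℕ) (τ : List ℕ) (p : List (ℕ × ℕ)) :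
    flipChain k (σ ++ j :: τ) p = flipChain k σ p ++ flipChain k τ (cflip k j (flipRun k σ p)) := by
  simp [flipChain, flipRun, scanl_append]

lemma getLastD_flipChain (σ : List ℕ) (p : List (ℕ × ℕ)) :
    (flipChain k σ p).getLastD [] = flipRun k σ p := by
  simp [flipChain, flipRun, getLastD_eq_getLast?, getLast?_scanl]

lemma flipRun_take_succ {σ : List ℕ} {t : ℕ} (ht : t < σ.length) (p : List (ℕ × ℕ)) :
    flipRun k (σ.take (t + 1)) p = cflip k (σ.getD t 0) (flipRun k (σ.take t) p) := by
  rw [take_add_one, getElem?_eq_getElem ht, flipRun_append]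
  simp [flipRun, getD_eq_getElem?_getD, getElem?_eq_getElem ht]

lemma flipChain_append_right {σ : List ℕ} {u : List (ℕ × ℕ)} (hσ : ∀ j ∈ σ, j ≤ u.length)
    (v : List (ℕ × ℕ)) : flipChain k σ (u ++ v) = (flipChain k σ u).map (· ++ v) := by
  induction σ generalizing u with
  | nil => rfl
  | cons j σ ih =>
    have hj : j ≤ u.length := hσ j mem_cons_self
    rw [flipChain_cons, flipChain_cons, cflip_append_of_le_length hj, ih, map_cons]
    intro i hi
    rw [length_cflip hj]
    exact hσ i (mem_cons_of_mem _ hi)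

lemma flipRun_append_right {σ : List ℕ} {u : List (ℕ × ℕ)} (hσ : ∀ j ∈ σ, j ≤ u.length)
    (v : List (ℕ × ℕ)) : flipRun k σ (u ++ v) = flipRun k σ u ++ v := by
  induction σ generalizing u with
  | nil => rfl
  | cons j σ ih =>
    have hj : j ≤ u.length := hσ j mem_cons_self
    rw [flipRun_cons, flipRun_cons, cflip_append_of_le_length hj, ih]
    intro i hi
    rw [length_cflip hj]
    exact hσ i (mem_cons_of_mem _ hi)

end Chains

def rot (k : ℕ) (p : List (ℕ × ℕ)) : List (ℕ × ℕ) :=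
  colShift k 1 p.getLast?.toList ++ p.dropLast

section Rotation

variable {k : ℕ}

lemma rot_append_singleton (u : List (ℕ × ℕ)) (x : ℕ × ℕ) :
    rot k (u ++ [x]) = colShift k 1 [x] ++ u := by
  simp [rot]

lemma rot_iterate_append (u w : List (ℕ × ℕ)) :
    (rot k)^[w.length] (u ++ w) = colShift k 1 w ++ u := by
  induction w using reverseRecOn generalizing u with
  | nil => simp [colShift]
  | append_singleton w x ih =>
    rw [length_append, length_singleton, Function.iterate_succ_apply, ← append_assoc,
      rot_append_singleton, ← append_assoc, ih]
    simp [colShift]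

lemma rot_iterate_mul_length {p : List (ℕ × ℕ)} (hp : ColoursBelow k p) (q : ℕ) :
    (rot k)^[q * p.length] p = colShift k q p := by
  induction q with
  | zero => rw [Nat.zero_mul, Function.iterate_zero_apply, colShift_eq_self (Nat.zero_mod k) hp]
  | succ q ih =>
    have h := rot_iterate_append (k := k) [] (colShift k q p)
    rw [nil_append, append_nil, colShift_colShift, length_colShift] at h
    rwa [Nat.succ_mul, Nat.add_comm, Function.iterate_add_apply, ih]

lemma rot_iterate_add_mul {u w : List (ℕ × ℕ)} (hp : ColoursBelow k (u ++ w)) (q : ℕ) :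
    (rot k)^[w.length + q * (u ++ w).length] (u ++ w) = colShift k (q + 1) w ++ colShift k q u := by
  have h := rot_iterate_append (k := k) (colShift k q u) (colShift k q w)
  rw [colShift_colShift, length_colShift] at h
  rw [Function.iterate_add_apply, rot_iterate_mul_length hp, colShift_append, h]

variable (k) in
lemma map_fst_rot_perm (p : List (ℕ × ℕ)) : ((rot k p).map Prod.fst).Perm (p.map Prod.fst) := by
  rcases eq_nil_or_concat' p with rfl | ⟨u, x, rfl⟩
  · simp [rot, colShift]
  · rw [rot_append_singleton, map_append, map_fst_colShift, map_append]
    exact perm_append_comm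

variable (k) in
lemma length_rot (p : List (ℕ × ℕ)) : (rot k p).length = p.length := by
  simpa using (map_fst_rot_perm k p).length_eq

lemma coloursBelow_rot (hk : 0 < k) {p : List (ℕ × ℕ)} (hp : ColoursBelow k p) :
    ColoursBelow k (rot k p) := by
  intro x hx
  rcases mem_append.1 hx with hx | hx
  · exact coloursBelow_colShift hk 1 _ x hx
  · exact hp x (dropLast_subset p hx)

variable (k) in
lemma map_fst_rot_iterate_perm (b : ℕ) (p : List (ℕ × ℕ)) :
    (((rot k)^[b] p).map Prod.fst).Perm (p.map Prod.fst) := by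
  induction b with
  | zero => rfl
  | succ b ih =>
    rw [Function.iterate_succ_apply']
    exact (map_fst_rot_perm k _).trans ih

variable (k) in
lemma length_rot_iterate (b : ℕ) (p : List (ℕ × ℕ)) : ((rot k)^[b] p).length = p.length := by
  simpa using (map_fst_rot_iterate_perm k b p).length_eq

lemma coloursBelow_rot_iterate (hk : 0 < k) (b : ℕ) {p : List (ℕ × ℕ)} (hp : ColoursBelow k p) :
    ColoursBelow k ((rot k)^[b] p) :=
  Function.Iterate.rec (ColoursBelow k) hp (fun _ => coloursBelow_rot hk) b

/-- `N - 1 - i` rotations bring `p[i]` to the end, and every further `N` rotations raise all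
colours by one. -/
lemma getLast?_rot_iterate {p : List (ℕ × ℕ)} (hp : ColoursBelow k p) {i : ℕ} (hi : i < p.length)
    (q : ℕ) : ((rot k)^[p.length - 1 - i + q * p.length] p).getLast? =
      some (p[i].1, (p[i].2 + q) % k) := by
  have h := rot_iterate_add_mul (u := p.take (i + 1)) (w := p.drop (i + 1))
    (by rwa [take_append_drop]) q
  rw [take_append_drop, length_drop, (by omega : p.length - (i + 1) = p.length - 1 - i)] at h
  rw [h, getLast?_append]
  simp [colShift, getLast?_take, getElem?_eq_getElem hi]

lemma eq_of_getLast?_rot_iterate_eq {p : List (ℕ × ℕ)} (hnd : (p.map Prod.fst).Nodup)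
    (hp : ColoursBelow k p) {b b' : ℕ} (hb : b < k * p.length) (hb' : b' < k * p.length)
    (h : ((rot k)^[b] p).getLast? = ((rot k)^[b'] p).getLast?) : b = b' := by
  set N := p.length
  have hN : 0 < N := Nat.pos_of_mul_pos_left (Nat.zero_lt_of_lt hb)
  have hdecomp : ∀ c < k * N, ∃ i < N, ∃ q < k, c = N - 1 - i + q * N := fun c hc =>
    ⟨N - 1 - c % N, by omega, c / N, (Nat.div_lt_iff_lt_mul hN).2 hc, by
      rw [(by have := Nat.mod_lt c hN; omega : N - 1 - (N - 1 - c % N) = c % N), Nat.mod_add_div']⟩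
  obtain ⟨i, hi, q, hq, rfl⟩ := hdecomp b hb
  obtain ⟨i', hi', q', hq', rfl⟩ := hdecomp b' hb'
  rw [getLast?_rot_iterate hp hi, getLast?_rot_iterate hp hi', Option.some_inj,
    Prod.mk.injEq] at h
  obtain ⟨hval, hcol⟩ := h
  obtain rfl : i = i' :=
    (hnd.getElem_inj_iff (hi := by simpa) (hj := by simpa)).1 (by simpa using hval)
  obtain rfl : q = q' := (Nat.ModEq.add_left_cancel' _ hcol).eq_of_lt_of_lt hq hq'
  rfl

lemma exists_getLast?_rot_iterate_eq {p : List (ℕ × ℕ)} (hp : ColoursBelow k p) {y : ℕ × ℕ}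
    (hy₁ : y.1 ∈ p.map Prod.fst) (hy₂ : y.2 < k) :
    ∃ b < k * p.length, ((rot k)^[b] p).getLast? = some y := by
  obtain ⟨i, hi, hpi⟩ := mem_iff_getElem.1 hy₁
  rw [length_map] at hi
  rw [getElem_map] at hpi
  have hci : p[i].2 < k := hp _ (getElem_mem hi)
  set q := (y.2 + k - p[i].2) % k
  have hq : q < k := Nat.mod_lt _ (Nat.zero_lt_of_lt hy₂)
  refine ⟨p.length - 1 - i + q * p.length, ?_, ?_⟩
  · have := Nat.mul_le_mul_right p.length (Nat.succ_le_of_lt hq)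
    rw [Nat.succ_mul] at this
    omega
  · rw [getLast?_rot_iterate hp hi, hpi, Nat.add_mod_mod,
      (by omega : p[i].2 + (y.2 + k - p[i].2) = y.2 + k), Nat.add_mod_right, Nat.mod_eq_of_lt hy₂]

end Rotation

/-- `V` lists the permutations visited before `p`. -/
def ShorterFlipsVisited (k : ℕ) : List (List (ℕ × ℕ)) → List ℕ → List (ℕ × ℕ) → Prop
  | _, [], _ => True
  | V, j :: σ, p =>
    (∀ i < j, cflip k i p ∈ V ++ [p]) ∧ ShorterFlipsVisited k (V ++ [p]) σ (cflip k j p)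

namespace ShorterFlipsVisited

variable {k : ℕ}

lemma mono {V W : List (List (ℕ × ℕ))} (hVW : V ⊆ W) {σ : List ℕ} {p : List (ℕ × ℕ)}
    (h : ShorterFlipsVisited k V σ p) : ShorterFlipsVisited k W σ p := by
  induction σ generalizing V W p with
  | nil => trivial
  | cons j σ ih =>
    have hVW' : V ++ [p] ⊆ W ++ [p] :=
      append_subset.2 ⟨fun x hx => subset_append_left _ _ (hVW hx), subset_append_right _ _⟩
    exact ⟨fun i hi => hVW' (h.1 i hi), ih hVW' h.2⟩

lemma append_right {V : List (List (ℕ × ℕ))} {σ : List ℕ} {u : List (ℕ × ℕ)}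
    (hσ : ∀ j ∈ σ, j ≤ u.length) (h : ShorterFlipsVisited k V σ u) (v : List (ℕ × ℕ)) :
    ShorterFlipsVisited k (V.map (· ++ v)) σ (u ++ v) := by
  induction σ generalizing V u with
  | nil => trivial
  | cons j σ ih =>
    have hj : j ≤ u.length := hσ j mem_cons_self
    refine ⟨fun i hi => ?_, ?_⟩
    · rw [cflip_append_of_le_length (by omega)]
      simpa using mem_map_of_mem (f := (· ++ v)) (h.1 i hi)
    · have := ih (fun i hi => (length_cflip hj).symm ▸ hσ i (mem_cons_of_mem _ hi)) h.2
      rwa [map_append, map_singleton, ← cflip_append_of_le_length hj] at this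

lemma append_cons {V : List (List (ℕ × ℕ))} {σ τ : List ℕ} {j : ℕ} {p : List (ℕ × ℕ)}
    (hσ : ShorterFlipsVisited k V σ p)
    (hj : ∀ i < j, cflip k i (flipRun k σ p) ∈ V ++ flipChain k σ p)
    (hτ : ShorterFlipsVisited k (V ++ flipChain k σ p) τ (cflip k j (flipRun k σ p))) :
    ShorterFlipsVisited k V (σ ++ j :: τ) p := by
  induction σ generalizing V p with
  | nil => exact ⟨hj, hτ⟩
  | cons i σ ih =>
    simp only [flipChain_cons, flipRun_cons] at hj hτ
    exact ⟨hσ.1, ih hσ.2 (by simpa using hj) (by simpa using hτ)⟩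

end ShorterFlipsVisited

def greedyStep (n k : ℕ) (L : List (List (ℕ × ℕ))) : List (List (ℕ × ℕ)) :=
  match ((List.range n).map (· + 1)).find? (fun j => decide (cflip k j (L.getLastD []) ∉ L)) with
  | some j => L ++ [cflip k j (L.getLastD [])]
  | none => L

section Greedy

variable {n k : ℕ}

lemma greedyList_eq_iterate (t : ℕ) : greedyList n k t = (greedyStep n k)^[t] [idPerm n] := by
  induction t with
  | zero => rfl
  | succ t ih => rw [Function.iterate_succ_apply', ← ih]; rfl

lemma greedyStep_append_singleton {V : List (List (ℕ × ℕ))} {p : List (ℕ × ℕ)} {j : ℕ}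
    (hj₁ : 1 ≤ j) (hjn : j ≤ n) (hvis : ∀ i < j, cflip k i p ∈ V ++ [p])
    (hnew : cflip k j p ∉ V ++ [p]) :
    greedyStep n k (V ++ [p]) = V ++ [p] ++ [cflip k j p] := by
  have hrange : (List.range n).map (· + 1) = range' 1 (j - 1) ++ j :: range' (j + 1) (n - j) := by
    have h := (range'_append (s := 1) (m := j - 1) (n := n - j + 1) (step := 1)).symm
    rw [(by omega : j - 1 + (n - j + 1) = n), (by omega : 1 + 1 * (j - 1) = j), range'_succ] at h
    rw [← h]
    simp [range'_eq_map_range, Nat.add_comm]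
  have hfind : ((List.range n).map (· + 1)).find?
      (fun i => decide (cflip k i p ∉ V ++ [p])) = some j := by
    refine find?_eq_some_iff_append.2 ⟨by simpa using hnew, _, _, hrange, fun i hi => ?_⟩
    simp only [mem_range'_1] at hi
    simpa using hvis i (by omega)
  simp only [greedyStep, hfind, getLastD_concat]

lemma greedyStep_iterate {σ : List ℕ} (hσ : ∀ j ∈ σ, 1 ≤ j ∧ j ≤ n)
    {V : List (List (ℕ × ℕ))} {p : List (ℕ × ℕ)} (hnd : (V ++ flipChain k σ p).Nodup)
    (hvis : ShorterFlipsVisited k V σ p) {t : ℕ} (ht : t ≤ σ.length) :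
    (greedyStep n k)^[t] (V ++ [p]) = V ++ flipChain k (σ.take t) p := by
  induction σ generalizing V p t with
  | nil => simp_all
  | cons j σ ih =>
    cases t with
    | zero => simp
    | succ t =>
      rw [flipChain_cons, ← singleton_append, ← append_assoc] at hnd
      have hnew : cflip k j p ∉ V ++ [p] :=
        fun h => disjoint_of_nodup_append hnd h (mem_flipChain_self _ _)
      have hj := hσ j mem_cons_self
      rw [Function.iterate_succ_apply, greedyStep_append_singleton hj.1 hj.2 hvis.1 hnew,
        ih (fun i hi => hσ i (mem_cons_of_mem _ hi)) hnd hvis.2 (by simpa using ht)]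
      simp

end Greedy

section SigmaSeqShape

variable {k : ℕ}

/-- The recursion also holds for `n = 0`, with `σ^k_0` empty, so inductions on `n` may start at
the empty word. -/
lemma sigmaSeq_succ (n : ℕ) :
    sigmaSeq k (n + 1) =
      (replicate (k * (n + 1) - 1) (sigmaSeq k n ++ [n + 1])).flatten ++ sigmaSeq k n := by
  cases n with
  | zero => simp [sigmaSeq]
  | succ n => rfl

lemma sigmaSeq_bounds (n : ℕ) : ∀ j ∈ sigmaSeq k n, 1 ≤ j ∧ j ≤ n := by
  induction n with
  | zero => simp [sigmaSeq]
  | succ n ih =>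
    intro j hj
    simp only [sigmaSeq_succ, mem_append, mem_flatten, mem_replicate] at hj
    rcases hj with ⟨l, ⟨-, rfl⟩, hl⟩ | hj
    · rcases mem_append.1 hl with hl | hl
      · have := ih j hl; omega
      · rw [mem_singleton.1 hl]; omega
    · have := ih j hj; omega

lemma length_sigmaSeq_add_one (hk : 0 < k) (n : ℕ) :
    (sigmaSeq k n).length + 1 = k ^ n * n.factorial := by
  induction n with
  | zero => simp [sigmaSeq]
  | succ n ih =>
    obtain ⟨m, hm⟩ : ∃ m, k * (n + 1) = m + 1 :=
      ⟨k * (n + 1) - 1, (Nat.sub_add_cancel (Nat.one_le_iff_ne_zero.2 (by positivity))).symm⟩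
    simp only [sigmaSeq_succ, length_append, length_flatten, map_replicate, sum_replicate,
      length_singleton, smul_eq_mul, hm, Nat.add_sub_cancel]
    rw [Nat.add_assoc, ih, Nat.factorial_succ, pow_succ, ← Nat.add_one_mul, ← hm]
    ring

end SigmaSeqShape

section Blocks

variable {k m : ℕ} {σ : List ℕ}

lemma flipRun_blocks
    (hend : ∀ q, q.length = m → ColoursBelow k q → cflip k m (flipRun k σ q) = rot k q)
    (hk : 0 < k) (c : ℕ) {p : List (ℕ × ℕ)} (hp : p.length = m) (hcol : ColoursBelow k p) :
    flipRun k ((replicate c (σ ++ [m])).flatten ++ σ) p = flipRun k σ ((rot k)^[c] p) := by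
  induction c generalizing p with
  | zero => rfl
  | succ c ih =>
    rw [replicate_succ, flatten_cons, append_assoc, append_assoc, singleton_append, flipRun_append,
      flipRun_cons, hend p hp hcol, ih ((length_rot k p).trans hp) (coloursBelow_rot hk hcol),
      Function.iterate_succ_apply]

lemma flipChain_blocks
    (hend : ∀ q, q.length = m → ColoursBelow k q → cflip k m (flipRun k σ q) = rot k q)
    (hk : 0 < k) (c : ℕ) {p : List (ℕ × ℕ)} (hp : p.length = m) (hcol : ColoursBelow k p) :
    flipChain k ((replicate c (σ ++ [m])).flatten ++ σ) p =
      (range (c + 1)).flatMap fun b => flipChain k σ ((rot k)^[b] p) := by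
  induction c generalizing p with
  | zero => simp
  | succ c ih =>
    rw [replicate_succ, flatten_cons, append_assoc, append_assoc, singleton_append,
      flipChain_append_cons, hend p hp hcol,
      ih ((length_rot k p).trans hp) (coloursBelow_rot hk hcol)]
    conv_rhs => rw [range_succ_eq_map, flatMap_cons, flatMap_map]
    rfl

lemma shorterFlipsVisited_blocks
    (hend : ∀ q, q.length = m → ColoursBelow k q → cflip k m (flipRun k σ q) = rot k q)
    (hblock : ∀ V q, q.length = m → ColoursBelow k q → ShorterFlipsVisited k V σ q)
    (hlast : ∀ q, q.length = m → ColoursBelow k q →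
      ∀ i < m, cflip k i (flipRun k σ q) ∈ flipChain k σ q)
    (hk : 0 < k) (c : ℕ) (V : List (List (ℕ × ℕ))) {p : List (ℕ × ℕ)} (hp : p.length = m)
    (hcol : ColoursBelow k p) :
    ShorterFlipsVisited k V ((replicate c (σ ++ [m])).flatten ++ σ) p := by
  induction c generalizing V p with
  | zero => exact hblock V p hp hcol
  | succ c ih =>
    rw [replicate_succ, flatten_cons, append_assoc, append_assoc, singleton_append]
    refine (hblock V p hp hcol).append_cons
      (fun i hi => mem_append_right _ (hlast p hp hcol i hi)) ?_
    rw [hend p hp hcol]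
    exact ih _ ((length_rot k p).trans hp) (coloursBelow_rot hk hcol)

end Blocks

section SigmaSeq

variable {k : ℕ}

lemma flipChain_sigmaSeq_append {n : ℕ} {u : List (ℕ × ℕ)} (hu : u.length = n)
    (v : List (ℕ × ℕ)) :
    flipChain k (sigmaSeq k n) (u ++ v) = (flipChain k (sigmaSeq k n) u).map (· ++ v) :=
  flipChain_append_right (fun j hj => hu ▸ (sigmaSeq_bounds n j hj).2) v

lemma flipRun_sigmaSeq_append {n : ℕ} {u : List (ℕ × ℕ)} (hu : u.length = n)
    (v : List (ℕ × ℕ)) :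
    flipRun k (sigmaSeq k n) (u ++ v) = flipRun k (sigmaSeq k n) u ++ v :=
  flipRun_append_right (fun j hj => hu ▸ (sigmaSeq_bounds n j hj).2) v

lemma getLast?_of_mem_flipChain_sigmaSeq {n : ℕ} {p y : List (ℕ × ℕ)} (hp : p.length = n + 1)
    (hy : y ∈ flipChain k (sigmaSeq k n) p) : y.getLast? = p.getLast? := by
  obtain ⟨u, x, rfl, hu⟩ := exists_eq_append_singleton hp
  rw [flipChain_sigmaSeq_append hu] at hy
  obtain ⟨w, -, rfl⟩ := mem_map.1 hy
  simp

lemma cflip_flipRun_eq_rot {n : ℕ} {σ : List ℕ} (hσ : ∀ j ∈ σ, j ≤ n)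
    (hrev : ∀ u, u.length = n → ColoursBelow k u → flipRun k σ u = colShift k (k - 1) u.reverse)
    (hk : 0 < k) {p : List (ℕ × ℕ)} (hp : p.length = n + 1) (hcol : ColoursBelow k p) :
    cflip k (n + 1) (flipRun k σ p) = rot k p := by
  obtain ⟨u, x, rfl, hu⟩ := exists_eq_append_singleton hp
  have hcolu : ColoursBelow k u := hcol.of_sublist (sublist_append_left _ _)
  have hrun : flipRun k σ (u ++ [x]) = colShift k (k - 1) u.reverse ++ [x] := by
    rw [flipRun_append_right (fun j hj => hu ▸ hσ j hj), hrev u hu hcolu]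
  have hlen : (colShift k (k - 1) u.reverse ++ [x]).length = n + 1 := by simp [hu]
  rw [hrun, ← hlen, cflip_length_self, reverse_append, colShift_reverse, reverse_reverse,
    reverse_singleton, colShift_append, colShift_colShift, Nat.sub_add_cancel hk,
    colShift_eq_self (Nat.mod_self k) hcolu, rot_append_singleton]

theorem flipRun_sigmaSeq (hk : 0 < k) {n : ℕ} {p : List (ℕ × ℕ)} (hp : p.length = n)
    (hcol : ColoursBelow k p) : flipRun k (sigmaSeq k n) p = colShift k (k - 1) p.reverse := by
  induction n generalizing p with
  | zero => rw [length_eq_zero_iff.1 hp]; rfl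
  | succ n ih =>
    obtain ⟨x, t, rfl⟩ := exists_cons_of_length_eq_add_one hp
    have ht : t.length = n := by simpa using hp
    have hcolt : ColoursBelow k t := hcol.of_sublist (sublist_cons_self x t)
    have hend : ∀ q : List (ℕ × ℕ), q.length = n + 1 → ColoursBelow k q →
        cflip k (n + 1) (flipRun k (sigmaSeq k n) q) = rot k q := fun q =>
      cflip_flipRun_eq_rot (fun j hj => (sigmaSeq_bounds n j hj).2) (fun u => ih) hk
    have hrot : (rot k)^[k * (n + 1) - 1] (x :: t) = t ++ colShift k (k - 1) [x] := by
      have h := rot_iterate_add_mul (u := [x]) (w := t) hcol (k - 1)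
      have hexp : (k - 1) * (n + 1) + (n + 1) = k * (n + 1) := by
        rw [← Nat.succ_mul, Nat.succ_eq_add_one, Nat.sub_add_cancel hk]
      rwa [singleton_append, length_cons, ht, Nat.sub_add_cancel hk,
        colShift_eq_self (Nat.mod_self k) hcolt,
        (by omega : n + (k - 1) * (n + 1) = k * (n + 1) - 1)] at h
    rw [sigmaSeq_succ, flipRun_blocks hend hk _ hp hcol, hrot,
      flipRun_sigmaSeq_append ht, ih ht hcolt, reverse_cons, colShift_append]

lemma cflip_flipRun_sigmaSeq (hk : 0 < k) {n : ℕ} {p : List (ℕ × ℕ)} (hp : p.length = n + 1)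
    (hcol : ColoursBelow k p) : cflip k (n + 1) (flipRun k (sigmaSeq k n) p) = rot k p :=
  cflip_flipRun_eq_rot (fun j hj => (sigmaSeq_bounds n j hj).2)
    (fun _ hu hcolu => flipRun_sigmaSeq hk hu hcolu) hk hp hcol

lemma flipChain_sigmaSeq_succ (hk : 0 < k) {n : ℕ} {p : List (ℕ × ℕ)} (hp : p.length = n + 1)
    (hcol : ColoursBelow k p) :
    flipChain k (sigmaSeq k (n + 1)) p =
      (range (k * (n + 1))).flatMap fun b => flipChain k (sigmaSeq k n) ((rot k)^[b] p) := by
  rw [sigmaSeq_succ, flipChain_blocks (fun _ => cflip_flipRun_sigmaSeq hk) hk _ hp hcol,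
    Nat.sub_add_cancel (Nat.one_le_iff_ne_zero.2 (by positivity))]

theorem nodup_flipChain_sigmaSeq (hk : 0 < k) {n : ℕ} {p : List (ℕ × ℕ)} (hp : p.length = n)
    (hnd : (p.map Prod.fst).Nodup) (hcol : ColoursBelow k p) :
    (flipChain k (sigmaSeq k n) p).Nodup := by
  induction n generalizing p with
  | zero => rw [length_eq_zero_iff.1 hp]; simp [sigmaSeq]
  | succ n ih =>
    rw [flipChain_sigmaSeq_succ hk hp hcol, nodup_flatMap]
    refine ⟨fun b _ => ?_, pairwise_lt_range.imp_of_mem fun {a b} ha hb hab y hya hyb => ?_⟩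
    · obtain ⟨u, x, hux, hu⟩ := exists_eq_append_singleton ((length_rot_iterate k b p).trans hp)
      have hndb := (map_fst_rot_iterate_perm k b p).nodup_iff.2 hnd
      have hcolb := coloursBelow_rot_iterate hk b hcol
      rw [hux, map_append] at hndb
      rw [hux] at hcolb ⊢
      rw [flipChain_sigmaSeq_append hu]
      exact (ih hu hndb.of_append_left (hcolb.of_sublist (sublist_append_left _ _))).map
        (append_left_injective [x])
    · have hlen : ∀ c, ((rot k)^[c] p).length = n + 1 :=
        fun c => (length_rot_iterate k c p).trans hp
      have := (getLast?_of_mem_flipChain_sigmaSeq (hlen a) hya).symm.trans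
        (getLast?_of_mem_flipChain_sigmaSeq (hlen b) hyb)
      rw [mem_range, ← hp] at ha hb
      exact hab.ne (eq_of_getLast?_rot_iterate_eq hnd hcol ha hb this)

theorem mem_flipChain_sigmaSeq (hk : 0 < k) {n : ℕ} {p q : List (ℕ × ℕ)} (hp : p.length = n)
    (hcol : ColoursBelow k p) (hqp : (q.map Prod.fst).Perm (p.map Prod.fst))
    (hq : ColoursBelow k q) : q ∈ flipChain k (sigmaSeq k n) p := by
  induction n generalizing p q with
  | zero =>
    rw [length_eq_zero_iff.1 hp] at hqp ⊢
    simpa [sigmaSeq] using hqp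
  | succ n ih =>
    obtain ⟨w, y, rfl, -⟩ := exists_eq_append_singleton (by simpa [hp] using hqp.length_eq)
    obtain ⟨b, hb, hlast⟩ :=
      exists_getLast?_rot_iterate_eq hcol (hqp.subset (by simp)) (hq y (by simp))
    obtain ⟨u, x, hux, hu⟩ := exists_eq_append_singleton ((length_rot_iterate k b p).trans hp)
    rw [hux, getLast?_concat, Option.some_inj] at hlast
    subst hlast
    have hperm := hqp.trans (map_fst_rot_iterate_perm k b p).symm
    have hcolb := coloursBelow_rot_iterate hk b hcol
    rw [hux, map_append, map_append, perm_append_right_iff] at hperm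
    rw [hux] at hcolb
    rw [flipChain_sigmaSeq_succ hk hp hcol, mem_flatMap]
    refine ⟨b, mem_range.2 (hp ▸ hb), ?_⟩
    rw [hux, flipChain_sigmaSeq_append hu]
    exact mem_map_of_mem (ih hu (hcolb.of_sublist (sublist_append_left _ _)) hperm
      (hq.of_sublist (sublist_append_left _ _)))

theorem shorterFlipsVisited_sigmaSeq (hk : 0 < k) {n : ℕ} {p : List (ℕ × ℕ)} (hp : p.length = n)
    (hcol : ColoursBelow k p) (V : List (List (ℕ × ℕ))) :
    ShorterFlipsVisited k V (sigmaSeq k n) p := by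
  induction n generalizing p V with
  | zero => simp [sigmaSeq, ShorterFlipsVisited]
  | succ n ih =>
    rw [sigmaSeq_succ]
    refine shorterFlipsVisited_blocks (fun _ => cflip_flipRun_sigmaSeq hk) (fun W q hq hcolq => ?_)
      (fun q hq hcolq i hi => ?_) hk _ V hp hcol
    · obtain ⟨u, x, rfl, hu⟩ := exists_eq_append_singleton hq
      have := (ih hu (hcolq.of_sublist (sublist_append_left _ _)) []).append_right
        (fun j hj => hu ▸ (sigmaSeq_bounds n j hj).2) [x]
      exact this.mono (by simp)
    · obtain ⟨u, x, rfl, hu⟩ := exists_eq_append_singleton hq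
      have hcolu : ColoursBelow k u := hcolq.of_sublist (sublist_append_left _ _)
      rw [flipRun_sigmaSeq_append hu, flipRun_sigmaSeq hk hu hcolu,
        cflip_append_of_le_length (by simp; omega), flipChain_sigmaSeq_append hu]
      refine mem_map_of_mem (mem_flipChain_sigmaSeq hk hu hcolu ?_
        (coloursBelow_cflip hk i (coloursBelow_colShift hk _ _)))
      rw [← map_fst_colShift (k := k) (k - 1) u]
      refine (map_fst_cflip_perm i _).trans ?_
      rw [colShift_reverse, map_reverse]
      exact reverse_perm _

end SigmaSeq

lemma length_idPerm (n : ℕ) : (idPerm n).length = n := by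
  simp [idPerm]

lemma nodup_map_fst_idPerm (n : ℕ) : ((idPerm n).map Prod.fst).Nodup := by
  simpa [idPerm, Function.comp_def] using (nodup_range (n := n)).map (add_left_injective 1)

lemma coloursBelow_idPerm {k : ℕ} (hk : 0 < k) (n : ℕ) : ColoursBelow k (idPerm n) := by
  simp [ColoursBelow, idPerm, hk]

theorem greedyList_eq_flipChain {k : ℕ} (hk : 0 < k) (n : ℕ) {t : ℕ}
    (ht : t ≤ (sigmaSeq k n).length) :
    greedyList n k t = flipChain k ((sigmaSeq k n).take t) (idPerm n) := by
  have hp := length_idPerm n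
  have hcol := coloursBelow_idPerm hk n
  rw [greedyList_eq_iterate, ← nil_append [idPerm n],
    greedyStep_iterate (sigmaSeq_bounds n)
      (by simpa using nodup_flipChain_sigmaSeq hk hp (nodup_map_fst_idPerm n) hcol)
      (shorterFlipsVisited_sigmaSeq hk hp hcol []) ht,
    nil_append]

end ColouredFlip

open ColouredFlip

theorem greedy_min_flipSeq_general (n k : ℕ) (hk : 1 ≤ k) :
    (greedyList n k (k ^ n * n.factorial - 1)).length = k ^ n * n.factorial ∧
    ∀ i, 1 ≤ i → i ≤ k ^ n * n.factorial - 1 →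
      (greedyList n k i).getLastD [] =
        cflip k ((sigmaSeq k n).getD (i - 1) 0) ((greedyList n k (i - 1)).getLastD []) := by
  have hlen := length_sigmaSeq_add_one hk n
  refine ⟨?_, fun i hi₁ hi₂ => ?_⟩
  · rw [greedyList_eq_flipChain hk _ (by omega), length_flipChain, List.length_take]
    omega
  · obtain ⟨t, rfl⟩ : ∃ t, i = t + 1 := ⟨i - 1, by omega⟩
    rw [Nat.add_sub_cancel, greedyList_eq_flipChain hk _ (by omega),
      greedyList_eq_flipChain hk _ (by omega), getLastD_flipChain, getLastD_flipChain,
      flipRun_take_succ (by omega)]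

/-- For all `n,k ≥ 1`, the greedy min-flip sequence does not get stuck
before producing all `kⁿ·n!` coloured permutations, and its flip lengths are exactly the
entries of `σ^k_n`: for `1 ≤ i ≤ kⁿ·n! - 1`, the step from `G_{i-1}` to `G_i` is a flip
whose length is the `i`-th entry of `σ^k_n`. -/
theorem greedy_min_flipSeq (n k : ℕ) (hn : 1 ≤ n) (hk : 1 ≤ k) :
    (greedyList n k (k ^ n * n.factorial - 1)).length = k ^ n * n.factorial ∧
    ∀ i, 1 ≤ i → i ≤ k ^ n * n.factorial - 1 →
      (greedyList n k i).getLastD [] =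
        cflip k ((sigmaSeq k n).getD (i - 1) 0) ((greedyList n k (i - 1)).getLastD []) :=
  greedy_min_flipSeq_general n k hk
end

section
/- Let n ≥ 1, k ≥ 1, and let π = q_1 q_2 ⋯ q_n ∈ CPERMS(n,k) with q_i = v_i^{c_i}. The length of the longest decreasing prefix of π equals the least j ∈ {1,…,n−1} for which at least one of the following holds, or equals n if no such j exists: (a) #{i ∈ {1,…,j} : v_i < v_{i+1}} = 2; (b) #{i ∈ {1,…,j} : v_i < v_{i+1}} = 1 and v_{j+1} < v_1; (c) k > 1, v_j < v_{j+1}, and (c_{j+1} − c_j) mod k ≠ 1; (d) k > 1, v_j > v_{j+1}, and c_j ≠ c_{j+1}. -/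
/-- A coloured permutation is increasing if it is a length-`n` subword of the circular
string `ρ(1⁰2⁰⋯n⁰)`; equivalently, each symbol is followed either by the next value with
the same colour, or (when its value is `n`) by value `1` with colour decremented mod `k`. -/
def IsIncreasing (n k : ℕ) (p : List (ℕ × ℕ)) : Prop :=
  IsCPerm n k p ∧ ∀ i, i + 1 < p.length →
    ((p.getD i (0,0)).1 < n ∧ (p.getD (i+1) (0,0)).1 = (p.getD i (0,0)).1 + 1 ∧
      (p.getD (i+1) (0,0)).2 = (p.getD i (0,0)).2) ∨
    ((p.getD i (0,0)).1 = n ∧ (p.getD (i+1) (0,0)).1 = 1 ∧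
      (p.getD (i+1) (0,0)).2 = ((p.getD i (0,0)).2 + k - 1) % k)

/-- A permutation is decreasing if it is the reversal of an increasing permutation. -/
def IsDecreasing (n k : ℕ) (p : List (ℕ × ℕ)) : Prop := IsIncreasing n k p.reverse

/-- A pre-perm is decreasing if it is a subsequence of a decreasing permutation. -/
def IsDecreasingPre (n k : ℕ) (p : List (ℕ × ℕ)) : Prop :=
  ∃ q, IsDecreasing n k q ∧ p.Sublist q

/-- The condition, on a position `j` of a coloured permutation `π` (1-based values
`v_i` and colours `c_i`), tested by the `Successor` algorithm: (a) two ascents among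
positions `1..j`; (b) one ascent and `v_{j+1} < v_1`; (c) `k > 1`, `v_j < v_{j+1}` and
`(c_{j+1} - c_j) mod k ≠ 1`; (d) `k > 1`, `v_j > v_{j+1}` and `c_j ≠ c_{j+1}`. -/
def descCond (k : ℕ) (π : List (ℕ × ℕ)) (j : ℕ) : Prop :=
  ((Finset.Icc 1 j).filter (fun i => (π.getD (i - 1) (0,0)).1 < (π.getD i (0,0)).1)).card = 2 ∨
  (((Finset.Icc 1 j).filter (fun i => (π.getD (i - 1) (0,0)).1 < (π.getD i (0,0)).1)).card = 1 ∧
    (π.getD j (0,0)).1 < (π.getD 0 (0,0)).1) ∨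
  (1 < k ∧ (π.getD (j - 1) (0,0)).1 < (π.getD j (0,0)).1 ∧
    ((π.getD j (0,0)).2 + k - (π.getD (j - 1) (0,0)).2) % k ≠ 1) ∨
  (1 < k ∧ (π.getD j (0,0)).1 < (π.getD (j - 1) (0,0)).1 ∧
    (π.getD (j - 1) (0,0)).2 ≠ (π.getD j (0,0)).2)

/-!
Put the symbol `v^c` at position `c n + (n - v)` of a cycle of length `k n`. Read from left to
right, a decreasing permutation visits `n` consecutive positions of this cycle, so a prefix
`q_1 ⋯ q_{t+1}` is decreasing exactly when the forward distances between consecutive symbols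
add up to less than `n`. The distance from `q_i` to `q_{i+1}` is less than `n` exactly when
neither (c) nor (d) holds, and it is then `v_i - v_{i+1}` or `n + v_i - v_{i+1}`, according as
the step is a descent or an ascent. Hence, as long as all distances are below `n`, the first `t`
of them add up to `v_1 - v_{t+1} + n · #ascents`, which is below `n` exactly when neither (a)
nor (b) has occurred.
-/

namespace DecreasingPrefix

def IsSymbol (n k : ℕ) (x : ℕ × ℕ) : Prop := 1 ≤ x.1 ∧ x.1 ≤ n ∧ x.2 < k

def pos (n : ℕ) (x : ℕ × ℕ) : ℕ := x.2 * n + (n - x.1)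

def symbolAt (n k p : ℕ) : ℕ × ℕ := (n - p % n, p / n % k)

def gap (n k : ℕ) (x y : ℕ × ℕ) : ℕ := ((pos n y : ZMod (k * n)) - pos n x).val

def IsColourBreak (k : ℕ) (x y : ℕ × ℕ) : Prop :=
  (1 < k ∧ x.1 < y.1 ∧ (y.2 + k - x.2) % k ≠ 1) ∨ (1 < k ∧ y.1 < x.1 ∧ x.2 ≠ y.2)

def gapSum (n k : ℕ) (x : ℕ → ℕ × ℕ) (t : ℕ) : ℕ :=
  ∑ i ∈ Finset.range t, gap n k (x i) (x (i + 1))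

def ascents (x : ℕ → ℕ × ℕ) (t : ℕ) : ℕ :=
  ((Finset.Icc 1 t).filter fun i => (x (i - 1)).1 < (x i).1).card

def decWindow (n k p : ℕ) : List (ℕ × ℕ) := (List.range n).map fun s => symbolAt n k (p + s)

variable {n k : ℕ}

theorem add_sub_mod_of_lt {a b : ℕ} (ha : a < k) (hb : b < k) :
    (b + k - a) % k = if a ≤ b then b - a else b + k - a := by
  split_ifs with hab
  · rw [show b + k - a = b - a + k by omega, Nat.add_mod_right, Nat.mod_eq_of_lt (by omega)]
  · exact Nat.mod_eq_of_lt (by omega)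

theorem mul_add_lt_iff {D d : ℕ} (hd : d < n) : D * n + d < n ↔ D = 0 := by
  rcases D with _ | D
  · simpa using hd
  · simp only [add_mul, one_mul, Nat.add_one_ne_zero, iff_false, not_lt]
    omega

theorem mul_sub_lt_iff {D d : ℕ} (hd : 1 ≤ d) (hdn : d < n) : D * n - d < n ↔ D ≤ 1 := by
  rcases D with _ | _ | D
  · rw [zero_mul, Nat.zero_sub]
    omega
  · rw [zero_add, one_mul]
    omega
  · have : 2 * n ≤ (D + 1 + 1) * n := Nat.mul_le_mul_right n (by omega)
    omega

theorem natCast_mul_eq_zero : (k : ZMod (k * n)) * n = 0 := by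
  exact_mod_cast ZMod.natCast_self (k * n)

theorem natCast_mod_mul (a : ℕ) : ((a % k : ℕ) : ZMod (k * n)) * n = a * n := by
  have h := (ZMod.natCast_eq_natCast_iff _ _ _).2 ((Nat.mod_modEq a k).mul_right' n)
  push_cast at h
  exact h

theorem natCast_add_sub_mod_mul {a b : ℕ} (ha : a < k) :
    (((b + k - a) % k : ℕ) : ZMod (k * n)) * n = (b - a) * n := by
  rw [natCast_mod_mul, Nat.cast_sub (by omega)]
  push_cast
  linear_combination natCast_mul_eq_zero

theorem natCast_pos {m : ℕ} {x : ℕ × ℕ} (hx : x.1 ≤ n) :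
    (pos n x : ZMod m) = x.2 * n + n - x.1 := by
  rw [pos, Nat.cast_add, Nat.cast_sub hx]
  push_cast
  ring

theorem IsSymbol.pos_lt {x : ℕ × ℕ} (hx : IsSymbol n k x) : pos n x < k * n := by
  obtain ⟨h1, h2, h3⟩ := hx
  calc pos n x < x.2 * n + n := by unfold pos; omega
    _ = (x.2 + 1) * n := by ring
    _ ≤ k * n := Nat.mul_le_mul_right n h3

theorem IsSymbol.eq_of_natCast_pos_eq {x y : ℕ × ℕ} (hx : IsSymbol n k x) (hy : IsSymbol n k y)
    (h : (pos n x : ZMod (k * n)) = pos n y) : x = y := by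
  rw [ZMod.natCast_eq_natCast_iff', Nat.mod_eq_of_lt hx.pos_lt, Nat.mod_eq_of_lt hy.pos_lt] at h
  have hn : 0 < n := by have := hx.1; have := hx.2.1; omega
  have hdivmod (z : ℕ × ℕ) (hz : IsSymbol n k z) :
      pos n z / n = z.2 ∧ pos n z % n = n - z.1 :=
    (Nat.div_mod_unique hn).2 ⟨by rw [pos]; ring, by have := hz.1; omega⟩
  obtain ⟨hx2, hx1⟩ := hdivmod x hx
  obtain ⟨hy2, hy1⟩ := hdivmod y hy
  rw [h] at hx2 hx1
  have := hx.1; have := hx.2.1; have := hy.1; have := hy.2.1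
  exact Prod.ext (by omega) (hx2.symm.trans hy2)

theorem isSymbol_symbolAt (hn : 0 < n) (hk : 0 < k) (p : ℕ) : IsSymbol n k (symbolAt n k p) :=
  ⟨show 1 ≤ n - p % n by have := Nat.mod_lt p hn; omega, Nat.sub_le _ _, Nat.mod_lt _ hk⟩

theorem natCast_pos_symbolAt (hn : 0 < n) (p : ℕ) :
    (pos n (symbolAt n k p) : ZMod (k * n)) = p := by
  have hp : n - (n - p % n) = p % n := by have := Nat.mod_lt p hn; omega
  simp only [pos, symbolAt, hp]
  rw [Nat.cast_add, Nat.cast_mul, natCast_mod_mul, ← Nat.cast_mul, ← Nat.cast_add,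
    Nat.div_add_mod']

theorem symbolAt_mul_add {q r : ℕ} (hr : r < n) : symbolAt n k (n * q + r) = (n - r, q % k) := by
  have hn : 0 < n := by omega
  simp only [symbolAt, Nat.mul_add_mod, Nat.mod_eq_of_lt hr, Nat.mul_add_div hn,
    Nat.div_eq_of_lt hr, add_zero]

theorem symbolAt_succ (hk : 0 < k) (hn : 0 < n) (m : ℕ) :
    ((symbolAt n k (m + 1)).1 < n ∧ (symbolAt n k m).1 = (symbolAt n k (m + 1)).1 + 1 ∧
      (symbolAt n k m).2 = (symbolAt n k (m + 1)).2) ∨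
    ((symbolAt n k (m + 1)).1 = n ∧ (symbolAt n k m).1 = 1 ∧
      (symbolAt n k m).2 = ((symbolAt n k (m + 1)).2 + k - 1) % k) := by
  have hm := (Nat.div_add_mod m n).symm
  have hr := Nat.mod_lt m hn
  generalize m / n = q, m % n = r at hm hr
  subst hm
  rw [symbolAt_mul_add hr]
  rcases (by omega : r + 1 < n ∨ r + 1 = n) with h | h
  · rw [add_assoc, symbolAt_mul_add h]
    exact Or.inl ⟨by omega, by omega, rfl⟩
  · rw [add_assoc, h, ← Nat.mul_add_one, ← add_zero (n * (q + 1)), symbolAt_mul_add hn]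
    refine Or.inr ⟨by omega, by omega, ?_⟩
    rw [Nat.add_sub_assoc hk, Nat.mod_add_mod, add_assoc, Nat.add_sub_cancel' hk, Nat.add_mod_right]

theorem gap_eq_of_natCast_eq {x y : ℕ × ℕ} {g : ℕ} (hg : g < k * n)
    (h : (g : ZMod (k * n)) = pos n y - pos n x) : gap n k x y = g := by
  rw [gap, ← h, ZMod.val_natCast, Nat.mod_eq_of_lt hg]

theorem natCast_gap [NeZero (k * n)] (x y : ℕ × ℕ) :
    (gap n k x y : ZMod (k * n)) = pos n y - pos n x :=
  ZMod.natCast_zmod_val _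

theorem gap_of_descent {x y : ℕ × ℕ} (hx : IsSymbol n k x) (hy : IsSymbol n k y)
    (h : y.1 < x.1) : gap n k x y = (y.2 + k - x.2) % k * n + (x.1 - y.1) := by
  obtain ⟨hx1, hxn, hxk⟩ := hx
  obtain ⟨hy1, hyn, hyk⟩ := hy
  apply gap_eq_of_natCast_eq
  · rw [Nat.mul_comm _ n]
    exact Nat.mul_add_lt_mul_of_lt_of_lt (Nat.mod_lt _ (by omega)) (by omega)
  · rw [Nat.cast_add, Nat.cast_mul, natCast_add_sub_mod_mul hxk, Nat.cast_sub h.le,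
      natCast_pos hxn, natCast_pos hyn]
    ring

theorem gap_of_ascent {x y : ℕ × ℕ} (hx : IsSymbol n k x) (hy : IsSymbol n k y)
    (h : x.1 < y.1) : gap n k x y =
      (if (y.2 + k - x.2) % k = 0 then k else (y.2 + k - x.2) % k) * n - (y.1 - x.1) := by
  obtain ⟨hx1, hxn, hxk⟩ := hx
  obtain ⟨hy1, hyn, hyk⟩ := hy
  have hkn : n ≤ k * n := Nat.le_mul_of_pos_left n (by omega)
  split_ifs with h0
  · have hxy : x.2 = y.2 := by rw [add_sub_mod_of_lt hxk hyk] at h0; split_ifs at h0 <;> omega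
    apply gap_eq_of_natCast_eq (by omega)
    rw [Nat.cast_sub (by omega), Nat.cast_sub h.le, natCast_pos hxn, natCast_pos hyn, hxy]
    push_cast
    linear_combination natCast_mul_eq_zero
  · have hDn : n ≤ (y.2 + k - x.2) % k * n := Nat.le_mul_of_pos_left n (by omega)
    have hDk : (y.2 + k - x.2) % k * n < k * n :=
      Nat.mul_lt_mul_of_pos_right (Nat.mod_lt _ (by omega)) (by omega)
    apply gap_eq_of_natCast_eq (by omega)
    rw [Nat.cast_sub (by omega), Nat.cast_mul, natCast_add_sub_mod_mul hxk, Nat.cast_sub h.le,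
      natCast_pos hxn, natCast_pos hyn]
    ring

theorem gap_lt_iff {x y : ℕ × ℕ} (hx : IsSymbol n k x) (hy : IsSymbol n k y)
    (hne : x.1 ≠ y.1) :
    gap n k x y < n ↔ ¬ IsColourBreak k x y := by
  have hDk : (y.2 + k - x.2) % k < k := Nat.mod_lt _ (by have := hx.2.2; omega)
  have hD := add_sub_mod_of_lt hx.2.2 hy.2.2
  have ⟨hx1, hxn, hxk⟩ := hx
  have ⟨hy1, hyn, hyk⟩ := hy
  rcases hne.lt_or_gt with h | h
  · rw [gap_of_ascent hx hy h, mul_sub_lt_iff (by omega) (by omega)]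
    simp only [IsColourBreak, h, h.not_gt, true_and, false_and, and_false, or_false]
    generalize (y.2 + k - x.2) % k = D at *
    split_ifs <;> omega
  · rw [gap_of_descent hx hy h, mul_add_lt_iff (by omega)]
    simp only [IsColourBreak, h, h.not_gt, true_and, false_and, and_false, false_or]
    generalize (y.2 + k - x.2) % k = D at *
    split_ifs at hD <;> omega

theorem gap_add_of_lt {x y : ℕ × ℕ} (hx : IsSymbol n k x) (hy : IsSymbol n k y)
    (hne : x.1 ≠ y.1) (hg : gap n k x y < n) :
    gap n k x y + y.1 = x.1 + if x.1 < y.1 then n else 0 := by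
  have hDk : (y.2 + k - x.2) % k < k := Nat.mod_lt _ (by have := hx.2.2; omega)
  have ⟨hx1, hxn, hxk⟩ := hx
  have ⟨hy1, hyn, hyk⟩ := hy
  rcases hne.lt_or_gt with h | h
  · rw [gap_of_ascent hx hy h] at hg ⊢
    rw [mul_sub_lt_iff (by omega) (by omega)] at hg
    generalize (y.2 + k - x.2) % k = D at *
    have hD : (if D = 0 then k else D) = 1 := by split_ifs at hg ⊢ <;> omega
    rw [hD, one_mul, if_pos h]
    omega
  · rw [gap_of_descent hx hy h] at hg ⊢
    rw [(mul_add_lt_iff (by omega)).1 hg, zero_mul, zero_add, if_neg h.not_gt]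
    omega

section Sequence

variable {x : ℕ → ℕ × ℕ} {t : ℕ}

theorem gapSum_succ : gapSum n k x (t + 1) = gapSum n k x t + gap n k (x t) (x (t + 1)) :=
  Finset.sum_range_succ _ _

theorem gapSum_mono : Monotone (gapSum n k x) := fun _ _ h =>
  Finset.sum_le_sum_of_subset (Finset.range_subset_range.2 h)

theorem gap_le_gapSum {i : ℕ} (h : i < t) : gap n k (x i) (x (i + 1)) ≤ gapSum n k x t :=
  Finset.single_le_sum (f := fun i => gap n k (x i) (x (i + 1))) (fun _ _ => Nat.zero_le _)
    (Finset.mem_range.2 h)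

theorem natCast_gapSum [NeZero (k * n)] (t : ℕ) :
    (gapSum n k x t : ZMod (k * n)) = pos n (x t) - pos n (x 0) := by
  simp only [gapSum, Nat.cast_sum, natCast_gap]
  exact Finset.sum_range_sub (fun i => (pos n (x i) : ZMod (k * n))) t

theorem ascents_succ :
    ascents x (t + 1) = ascents x t + if (x t).1 < (x (t + 1)).1 then 1 else 0 := by
  simp only [ascents, Finset.card_filter, Finset.sum_Icc_succ_top (Nat.le_add_left 1 t),
    Nat.add_sub_cancel]

theorem gapSum_add_fst (hx : ∀ i ≤ t, IsSymbol n k (x i))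
    (hne : ∀ i < t, (x i).1 ≠ (x (i + 1)).1) (hgap : ∀ i < t, gap n k (x i) (x (i + 1)) < n) :
    gapSum n k x t + (x t).1 = (x 0).1 + ascents x t * n := by
  induction t with
  | zero => simp [gapSum, ascents]
  | succ t ih =>
    have hstep := gap_add_of_lt (hx t (by omega)) (hx (t + 1) le_rfl) (hne t (by omega))
      (hgap t (by omega))
    rw [gapSum_succ, ascents_succ, add_mul, add_assoc, hstep, ← add_assoc,
      ih (fun i hi => hx i (by omega)) (fun i hi => hne i (by omega))
        (fun i hi => hgap i (by omega))]
    split_ifs <;> simp only [one_mul, zero_mul] <;> omega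

end Sequence

theorem _root_.IsIncreasing.natCast_pos_getD_eq_add_one {p : List (ℕ × ℕ)}
    (hp : IsIncreasing n k p) {i : ℕ} (hi : i + 1 < p.length) :
    (pos n (p.getD i (0, 0)) : ZMod (k * n)) = pos n (p.getD (i + 1) (0, 0)) + 1 := by
  have hn : p.length = n := by simpa using hp.1.1.length_eq
  rcases hp.2 i hi with ⟨hlt, hv, hc⟩ | ⟨hv, hv1, hc⟩
  · have : pos n (p.getD i (0, 0)) = pos n (p.getD (i + 1) (0, 0)) + 1 := by
      simp only [pos, hv, hc]
      omega
    rw [this]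
    push_cast
    ring
  · have hk : (p.getD i (0, 0)).2 < k := hp.1.2 _ <| by
      rw [List.getD_eq_getElem _ _ (by omega)]
      exact List.getElem_mem _
    rw [natCast_pos hv.le, natCast_pos (by omega), hv, hv1, hc, natCast_mod_mul,
      Nat.cast_sub (by omega)]
    push_cast
    linear_combination -natCast_mul_eq_zero

theorem _root_.IsDecreasing.natCast_pos_getD {q : List (ℕ × ℕ)} (hq : IsDecreasing n k q)
    {s : ℕ} (hs : s < q.length) :
    (pos n (q.getD s (0, 0)) : ZMod (k * n)) = pos n (q.getD 0 (0, 0)) + s := by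
  induction s with
  | zero => simp
  | succ s ih =>
    have hrev (j : ℕ) (hj : j < q.length) :
        q.getD j (0, 0) = q.reverse.getD (q.length - 1 - j) (0, 0) := by
      rw [List.getD_reverse _ (by omega)]
      congr 1
      omega
    have hstep := hq.natCast_pos_getD_eq_add_one (i := q.length - 1 - (s + 1))
      (by rw [List.length_reverse]; omega)
    rw [← hrev _ hs, show q.length - 1 - (s + 1) + 1 = q.length - 1 - s by omega,
      ← hrev _ (by omega), ih (by omega)] at hstep
    push_cast
    linear_combination hstep

theorem decWindow_length (p : ℕ) : (decWindow n k p).length = n := by simp [decWindow]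

theorem decWindow_getD {p s : ℕ} (hs : s < n) :
    (decWindow n k p).getD s (0, 0) = symbolAt n k (p + s) := by
  simp [decWindow, hs]

theorem decWindow_map_fst_perm (hn : 0 < n) (p : ℕ) :
    ((decWindow n k p).map Prod.fst).Perm ((List.range n).map (· + 1)) := by
  simp only [decWindow, List.map_map, Function.comp_def, symbolAt]
  refine (List.subperm_of_subset (List.nodup_range.map_on fun s hs s' hs' h => ?_)
    fun v hv => ?_).perm_of_length_le (by simp)
  · rw [List.mem_range] at hs hs'
    have h' : (p + s) % n = (p + s') % n := by
      have := Nat.mod_lt (p + s) hn; have := Nat.mod_lt (p + s') hn; omega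
    have := Nat.ModEq.add_left_cancel' p h'
    rwa [Nat.ModEq, Nat.mod_eq_of_lt hs, Nat.mod_eq_of_lt hs'] at this
  · obtain ⟨s, -, rfl⟩ := List.mem_map.1 hv
    have := Nat.mod_lt (p + s) hn
    exact List.mem_map.2 ⟨n - 1 - (p + s) % n, List.mem_range.2 (by omega), by omega⟩

theorem decWindow_isDecreasing (hk : 0 < k) (p : ℕ) : IsDecreasing n k (decWindow n k p) := by
  rcases Nat.eq_zero_or_pos n with rfl | hn
  · simp [IsDecreasing, IsIncreasing, IsCPerm, decWindow]
  refine ⟨⟨?_, fun x hx => ?_⟩, fun i hi => ?_⟩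
  · rw [List.map_reverse]
    exact (List.reverse_perm _).trans (decWindow_map_fst_perm hn p)
  · obtain ⟨s, -, rfl⟩ := List.mem_map.1 (List.mem_reverse.1 hx)
    exact Nat.mod_lt _ hk
  · rw [List.length_reverse, decWindow_length] at hi
    rw [List.getD_reverse _ (by rw [decWindow_length]; omega),
      List.getD_reverse _ (by rw [decWindow_length]; omega), decWindow_length,
      decWindow_getD (by omega), decWindow_getD (by omega),
      show p + (n - 1 - i) = p + (n - 1 - (i + 1)) + 1 by omega]
    exact symbolAt_succ hk hn _

section CPerm

variable {π : List (ℕ × ℕ)} {t : ℕ}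

theorem _root_.IsCPerm.length_eq (hπ : IsCPerm n k π) : π.length = n := by
  simpa using hπ.1.length_eq

theorem _root_.IsCPerm.isSymbol_getD (hπ : IsCPerm n k π) {i : ℕ} (hi : i < n) :
    IsSymbol n k (π.getD i (0, 0)) := by
  have hmem : π.getD i (0, 0) ∈ π := by
    rw [List.getD_eq_getElem _ _ (hπ.length_eq ▸ hi)]
    exact List.getElem_mem _
  obtain ⟨v, hv, hveq⟩ :=
    List.mem_map.1 (hπ.1.subset (List.mem_map_of_mem (f := Prod.fst) hmem))
  rw [List.mem_range] at hv
  exact ⟨by omega, by omega, hπ.2 _ hmem⟩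

theorem _root_.IsCPerm.getD_fst_ne (hπ : IsCPerm n k π) {i j : ℕ} (hi : i < n) (hj : j < n)
    (hij : i ≠ j) : (π.getD i (0, 0)).1 ≠ (π.getD j (0, 0)).1 := by
  have hnd : (π.map Prod.fst).Nodup :=
    hπ.1.nodup_iff.2 (List.nodup_range.map (add_left_injective 1))
  rw [List.getD_eq_getElem _ _ (hπ.length_eq ▸ hi),
    List.getD_eq_getElem _ _ (hπ.length_eq ▸ hj)]
  intro h
  exact hij <| (hnd.getElem_inj_iff (hi := by simp [hπ.length_eq, hi])
    (hj := by simp [hπ.length_eq, hj])).1 (by simpa using h)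

theorem _root_.IsCPerm.gapSum_add_fst (hπ : IsCPerm n k π) (ht : t < n)
    (hgap : ∀ i < t, gap n k (π.getD i (0, 0)) (π.getD (i + 1) (0, 0)) < n) :
    gapSum n k (π.getD · (0, 0)) t + (π.getD t (0, 0)).1 =
      (π.getD 0 (0, 0)).1 + ascents (π.getD · (0, 0)) t * n :=
  DecreasingPrefix.gapSum_add_fst (fun _ hi => hπ.isSymbol_getD (by omega))
    (fun _ hi => hπ.getD_fst_ne (by omega) (by omega) (by omega)) hgap

theorem not_descCond_of_gapSum_lt (hπ : IsCPerm n k π) (ht : 1 ≤ t) (htn : t < n)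
    (h : gapSum n k (π.getD · (0, 0)) t < n) : ¬ descCond k π t := by
  obtain ⟨s, rfl⟩ : ∃ s, t = s + 1 := ⟨t - 1, by omega⟩
  have hgap (i : ℕ) (hi : i < s + 1) :
      gap n k (π.getD i (0, 0)) (π.getD (i + 1) (0, 0)) < n :=
    (gap_le_gapSum hi).trans_lt h
  have hcount := hπ.gapSum_add_fst htn hgap
  have hv0 := (hπ.isSymbol_getD (i := 0) (by omega)).2.1
  have hvt := (hπ.isSymbol_getD htn).2.1
  rintro (h2 | ⟨h1, hlt⟩ | hbreak)
  · change ascents (π.getD · (0, 0)) (s + 1) = 2 at h2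
    rw [h2] at hcount
    omega
  · change ascents (π.getD · (0, 0)) (s + 1) = 1 at h1
    rw [h1] at hcount
    omega
  · exact (gap_lt_iff (hπ.isSymbol_getD (by omega)) (hπ.isSymbol_getD htn)
      (hπ.getD_fst_ne (by omega) htn (by omega))).1 (hgap s (by omega)) hbreak

theorem gapSum_succ_lt_of_not_descCond (hπ : IsCPerm n k π) (ht : t + 1 < n)
    (h : gapSum n k (π.getD · (0, 0)) t < n) (hnd : ¬ descCond k π (t + 1)) :
    gapSum n k (π.getD · (0, 0)) (t + 1) < n := by
  have hgap (i : ℕ) (hi : i < t + 1) :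
      gap n k (π.getD i (0, 0)) (π.getD (i + 1) (0, 0)) < n := by
    rcases Nat.lt_succ_iff_lt_or_eq.1 hi with hi | rfl
    · exact (gap_le_gapSum hi).trans_lt h
    · exact (gap_lt_iff (hπ.isSymbol_getD (by omega)) (hπ.isSymbol_getD ht)
        (hπ.getD_fst_ne (by omega) ht (by omega))).2 fun hb => hnd (Or.inr (Or.inr hb))
  have hcount := hπ.gapSum_add_fst ht hgap
  have hcount' := hπ.gapSum_add_fst (t := t) (by omega) fun i hi => hgap i (by omega)
  obtain ⟨hv0, hv0n, -⟩ := hπ.isSymbol_getD (i := 0) (by omega)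
  obtain ⟨hvt, hvtn, -⟩ := hπ.isSymbol_getD (i := t) (by omega)
  obtain ⟨hvt1, hvt1n, -⟩ := hπ.isSymbol_getD ht
  have hne0 := hπ.getD_fst_ne ht (j := 0) (by omega) (by omega)
  have hasc : ascents (π.getD · (0, 0)) t < 2 := Nat.lt_of_mul_lt_mul_right (a := n) (by omega)
  have hasc2 : ascents (π.getD · (0, 0)) (t + 1) ≠ 2 := fun h2 => hnd (Or.inl h2)
  have hasc1 : ¬ (ascents (π.getD · (0, 0)) (t + 1) = 1 ∧
      (π.getD (t + 1) (0, 0)).1 < (π.getD 0 (0, 0)).1) := fun hb => hnd (Or.inr (Or.inl hb))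
  have hsucc := ascents_succ (x := (π.getD · (0, 0))) (t := t)
  rcases (by split_ifs at hsucc <;> omega : ascents (π.getD · (0, 0)) (t + 1) = 0 ∨
      ascents (π.getD · (0, 0)) (t + 1) = 1) with h0 | h0 <;>
    · rw [h0] at hcount
      omega

theorem gapSum_lt_iff (hπ : IsCPerm n k π) (ht : t < n) :
    gapSum n k (π.getD · (0, 0)) t < n ↔ ∀ s, 1 ≤ s → s ≤ t → ¬ descCond k π s := by
  induction t with
  | zero => exact ⟨fun _ s h1 h2 => absurd h2 (by omega), fun _ => by simpa [gapSum] using ht⟩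
  | succ t ih =>
    refine ⟨fun h s hs1 hs2 => not_descCond_of_gapSum_lt hπ hs1 (by omega)
      ((gapSum_mono hs2).trans_lt h), fun h => ?_⟩
    exact gapSum_succ_lt_of_not_descCond hπ ht
      ((ih (by omega)).2 fun s hs1 hs2 => h s hs1 (by omega)) (h (t + 1) (by omega) le_rfl)

theorem gapSum_lt_of_isDecreasingPre (hπ : IsCPerm n k π) (ht : t < n)
    (h : IsDecreasingPre n k (π.take (t + 1))) : gapSum n k (π.getD · (0, 0)) t < n := by
  obtain ⟨q, hq, hsub⟩ := h
  obtain ⟨f, hf⟩ := List.sublist_iff_exists_orderEmbedding_getElem?_eq.1 hsub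
  have hqn : q.length = n := by simpa using hq.1.1.length_eq
  have hfq (l : ℕ) (hl : l ≤ t) : f l < n ∧ q.getD (f l) (0, 0) = π.getD l (0, 0) := by
    have h := hf l
    rw [List.getElem?_take, if_pos (by omega),
      List.getElem?_eq_getElem (by rw [hπ.length_eq]; omega), eq_comm,
      List.getElem?_eq_some_iff] at h
    obtain ⟨hlt, heq⟩ := h
    rw [List.getD_eq_getElem _ _ hlt, List.getD_eq_getElem _ _ (by rw [hπ.length_eq]; omega)]
    exact ⟨hqn ▸ hlt, heq⟩
  have hkn : n ≤ k * n := Nat.le_mul_of_pos_left n (Nat.zero_lt_of_lt (hπ.isSymbol_getD ht).2.2)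
  have hgap (l : ℕ) (hl : l ∈ Finset.range t) :
      gap n k (π.getD l (0, 0)) (π.getD (l + 1) (0, 0)) = f (l + 1) - f l := by
    rw [Finset.mem_range] at hl
    obtain ⟨hl1, hq1⟩ := hfq (l + 1) (by omega)
    obtain ⟨hl0, hq0⟩ := hfq l (by omega)
    apply gap_eq_of_natCast_eq (by omega)
    rw [← hq1, ← hq0, hq.natCast_pos_getD (s := f (l + 1)) (by omega),
      hq.natCast_pos_getD (s := f l) (by omega), Nat.cast_sub (f.monotone (Nat.le_succ l))]
    ring
  rw [gapSum, Finset.sum_congr rfl hgap, Finset.sum_range_tsub f.monotone]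
  have := (hfq t le_rfl).1
  omega

theorem isDecreasingPre_of_gapSum_lt (hπ : IsCPerm n k π) (ht : t < n)
    (h : gapSum n k (π.getD · (0, 0)) t < n) : IsDecreasingPre n k (π.take (t + 1)) := by
  have hk : 0 < k := Nat.zero_lt_of_lt (hπ.isSymbol_getD ht).2.2
  have hn : 0 < n := by omega
  have hstep (l : ℕ) (hl : l < t) :
      gapSum n k (π.getD · (0, 0)) l < gapSum n k (π.getD · (0, 0)) (l + 1) := by
    obtain ⟨hx1, -, -⟩ := hπ.isSymbol_getD (i := l) (by omega)
    obtain ⟨-, hyn, -⟩ := hπ.isSymbol_getD (i := l + 1) (by omega)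
    have hne := hπ.getD_fst_ne (i := l) (j := l + 1) (by omega) (by omega) (by omega)
    have := gap_add_of_lt (hπ.isSymbol_getD (by omega)) (hπ.isSymbol_getD (by omega)) hne
      ((gap_le_gapSum hl).trans_lt h)
    rw [gapSum_succ]
    split_ifs at this <;> omega
  -- `π_l` sits at index `gapSum l` of the window starting at `π_0`; beyond `t`, `f` leaves it.
  let f (l : ℕ) : ℕ := if l ≤ t then gapSum n k (π.getD · (0, 0)) l else n + l
  have hf : StrictMono f := strictMono_nat_of_lt_succ fun l => by
    simp only [f]
    split_ifs with hl hl'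
    · exact hstep l (by omega)
    · exact ((gapSum_mono hl).trans_lt h).trans (by omega)
    · omega
    · omega
  refine ⟨decWindow n k (pos n (π.getD 0 (0, 0))), decWindow_isDecreasing hk _,
    List.sublist_iff_exists_orderEmbedding_getElem?_eq.2
      ⟨OrderEmbedding.ofStrictMono f hf, fun l => ?_⟩⟩
  simp only [OrderEmbedding.coe_ofStrictMono, f, List.getElem?_take]
  split_ifs with h1 h2 h2
  · have hgl := (gapSum_mono h2).trans_lt h
    rw [List.getElem?_eq_getElem (by rw [hπ.length_eq]; omega),
      List.getElem?_eq_getElem (by rw [decWindow_length]; exact hgl),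
      ← List.getD_eq_getElem (d := (0, 0)), ← List.getD_eq_getElem (d := (0, 0)),
      decWindow_getD hgl]
    have : NeZero (k * n) := ⟨by positivity⟩
    congr 1
    refine ((isSymbol_symbolAt hn hk _).eq_of_natCast_pos_eq
      (hπ.isSymbol_getD (i := l) (by omega)) ?_).symm
    rw [natCast_pos_symbolAt hn, Nat.cast_add, natCast_gapSum]
    ring
  · omega
  · omega
  · rw [List.getElem?_eq_none (by rw [decWindow_length]; omega)]

theorem isDecreasingPre_take_succ_iff (hπ : IsCPerm n k π) (ht : t < n) :
    IsDecreasingPre n k (π.take (t + 1)) ↔ ∀ s, 1 ≤ s → s ≤ t → ¬ descCond k π s :=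
  Iff.trans ⟨gapSum_lt_of_isDecreasingPre hπ ht, isDecreasingPre_of_gapSum_lt hπ ht⟩
    (gapSum_lt_iff hπ ht)

end CPerm

end DecreasingPrefix

open DecreasingPrefix in
theorem longest_decreasing_prefix_rule_general (n k : ℕ)
    (π : List (ℕ × ℕ)) (hπ : IsCPerm n k π)
    (j : ℕ) (hjle : j ≤ π.length)
    (hdec : IsDecreasingPre n k (π.take j))
    (hmax : ∀ t, t ≤ π.length → IsDecreasingPre n k (π.take t) → t ≤ j) :
    (∃ j', (1 ≤ j' ∧ j' ≤ n - 1 ∧ descCond k π j') ∧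
      (∀ t, 1 ≤ t → t ≤ n - 1 → descCond k π t → j' ≤ t) ∧ j = j') ∨
    ((∀ t, 1 ≤ t → t ≤ n - 1 → ¬ descCond k π t) ∧ j = n) := by
  have hlen := hπ.length_eq
  have key (t : ℕ) (ht : t < n) := isDecreasingPre_take_succ_iff hπ ht
  rcases j with _ | i
  · have hn : n = 0 := by
      by_contra hn
      have := hmax 1 (by omega) ((key 0 (by omega)).2 fun s hs1 hs2 => by omega)
      omega
    exact Or.inr ⟨fun t ht1 ht2 => by omega, hn.symm⟩
  have hnot := (key i (by omega)).1 hdec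
  rcases (by omega : i + 1 < n ∨ i + 1 = n) with hlt | heq
  · have hcond : descCond k π (i + 1) := by
      by_contra hc
      have := hmax (i + 2) (by omega) <| (key (i + 1) hlt).2 fun s hs1 hs2 => by
        rcases (by omega : s ≤ i ∨ s = i + 1) with hs | rfl
        · exact hnot s hs1 hs
        · exact hc
      omega
    exact Or.inl ⟨i + 1, ⟨by omega, by omega, hcond⟩,
      fun t ht1 _ htc => by_contra fun hti => hnot t ht1 (by omega) htc, rfl⟩
  · exact Or.inr ⟨fun t ht1 _ => hnot t ht1 (by omega), heq⟩

/-- For `π ∈ CPERMS(n,k)`, the length `j` of the longest decreasing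
prefix of `π` equals the least `j' ∈ {1,…,n-1}` satisfying one of the conditions
(a)–(d) of `descCond`, or equals `n` if no such `j'` exists. -/
theorem longest_decreasing_prefix_rule (n k : ℕ) (hn : 1 ≤ n) (hk : 1 ≤ k)
    (π : List (ℕ × ℕ)) (hπ : IsCPerm n k π)
    (j : ℕ) (hjle : j ≤ π.length)
    (hdec : IsDecreasingPre n k (π.take j))
    (hmax : ∀ t, t ≤ π.length → IsDecreasingPre n k (π.take t) → t ≤ j) :
    (∃ j', (1 ≤ j' ∧ j' ≤ n - 1 ∧ descCond k π j') ∧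
      (∀ t, 1 ≤ t → t ≤ n - 1 → descCond k π t → j' ≤ t) ∧ j = j') ∨
    ((∀ t, 1 ≤ t → t ≤ n - 1 → ¬ descCond k π t) ∧ j = n) :=
  longest_decreasing_prefix_rule_general n k π hπ j hjle hdec hmax
end

section
/- For all n ≥ 1 and k ≥ 1, let S denote the sum of the entries of the flip sequence σ^k_n. Then the average flip length of the cyclic Gray code satisfies (S + n)/(k^n·n!) = Σ_{j=0}^{n−1} 1/(k^j·j!). -/
lemma sigmaSeq_sum_add_two (k n : ℕ) :
    (sigmaSeq k (n + 2)).sum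
      = (k * (n + 2) - 1) * ((sigmaSeq k (n + 1)).sum + (n + 2)) + (sigmaSeq k (n + 1)).sum := by
  simp [sigmaSeq, List.sum_flatten, List.sum_replicate]

lemma sigmaSeq_sum_succ_add_succ {k : ℕ} (hk : 1 ≤ k) (n : ℕ) :
    (sigmaSeq k (n + 1)).sum + (n + 1) = k * (n + 1) * ((sigmaSeq k n).sum + (n + 1)) := by
  obtain ⟨c, hc⟩ : ∃ c, k * (n + 1) = c + 1 :=
    Nat.exists_eq_add_of_le' (Nat.one_le_iff_ne_zero.mpr (by positivity))
  cases n with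
  | zero =>
    simp only [sigmaSeq, List.sum_replicate, smul_eq_mul, mul_one, zero_add, List.sum_nil]
    omega
  | succ n =>
    rw [sigmaSeq_sum_add_two, hc, Nat.add_sub_cancel]
    ring

theorem average_flip_length_general (n k : ℕ) (hk : 1 ≤ k) :
    (((sigmaSeq k n).sum : ℚ) + n) / ((k : ℚ) ^ n * (n.factorial : ℚ)) =
      ∑ j ∈ Finset.range n, 1 / ((k : ℚ) ^ j * (j.factorial : ℚ)) := by
  induction n with
  | zero => simp [sigmaSeq]
  | succ n ih =>
    have hrec : ((sigmaSeq k (n + 1)).sum : ℚ) + (n + 1)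
        = k * (n + 1) * ((sigmaSeq k n).sum + (n + 1)) := by
      exact_mod_cast sigmaSeq_sum_succ_add_succ hk n
    have hk0 : (k : ℚ) ≠ 0 := by positivity
    rw [Finset.sum_range_succ, ← ih, Nat.cast_succ, hrec, Nat.factorial_succ, pow_succ]
    push_cast
    field_simp
    ring

/-- For `n,k ≥ 1`, if `S` is the sum of the entries of `σ^k_n`, then
the average flip length of the cyclic Gray code satisfies
`(S + n)/(kⁿ·n!) = Σ_{j=0}^{n-1} 1/(k^j·j!)`. -/
theorem average_flip_length (n k : ℕ) (hn : 1 ≤ n) (hk : 1 ≤ k) :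
    (((sigmaSeq k n).sum : ℚ) + n) / ((k : ℚ) ^ n * (n.factorial : ℚ)) =
      ∑ j ∈ Finset.range n, 1 / ((k : ℚ) ^ j * (j.factorial : ℚ)) :=
  average_flip_length_general n k hk
end

section
/- For all n ≥ 1 and k ≥ 1, let S denote the sum of the entries of the flip sequence σ^k_n. Then (S + n)/(k^n·n!) < e^{1/k}, the k-th root of Euler's number e; i.e., the average flip length avg(n,k) of the cyclic Gray code is strictly less than e^{1/k}. -/
lemma sigmaSeq_sum_add (k : ℕ) (hk : 1 ≤ k) : ∀ n, 1 ≤ n →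
    ((sigmaSeq k n).sum : ℝ) + n =
      ((k : ℝ) ^ n * (n.factorial : ℝ)) * ∑ j ∈ Finset.range n, (1 / (k : ℝ)) ^ j / j.factorial
  | 0, h => by omega
  | 1, _ => by
    simp [sigmaSeq, Nat.cast_sub hk]
  | n + 2, _ => by
    have ih := sigmaSeq_sum_add k hk (n + 1) (by omega)
    have hk0 : (k : ℝ) ≠ 0 := by positivity
    have hm1 : (k * (n + 2) - 1) + 1 = k * (n + 2) := by
      have : 0 < k * (n + 2) := Nat.mul_pos hk (by omega)
      omega
    have hsumN : (sigmaSeq k (n + 2)).sum + (n + 2) =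
        (k * (n + 2)) * ((sigmaSeq k (n + 1)).sum + (n + 2)) := by
      show ((List.replicate (k * (n + 2) - 1) (sigmaSeq k (n + 1) ++ [n + 2])).flatten
          ++ sigmaSeq k (n + 1)).sum + (n + 2) = _
      rw [← hm1]
      rw [List.sum_append, List.sum_flatten, List.map_replicate, List.sum_replicate,
        List.sum_append, smul_eq_mul]
      generalize (k * (n + 2) - 1) = m
      simp
      ring
    have hR : ((sigmaSeq k (n + 2)).sum : ℝ) + ((n : ℝ) + 2) =
        ((k : ℝ) * ((n : ℝ) + 2)) * (((sigmaSeq k (n + 1)).sum : ℝ) + ((n : ℝ) + 2)) := by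
      exact_mod_cast congrArg (Nat.cast : ℕ → ℝ) hsumN
    have hK0 : ((k : ℝ) ^ (n + 1)) ≠ 0 := by positivity
    have hF0 : (((n + 1).factorial : ℝ)) ≠ 0 := by positivity
    have hSig : ∑ j ∈ Finset.range (n + 1), (1 / (k : ℝ)) ^ j / j.factorial =
        (((sigmaSeq k (n + 1)).sum : ℝ) + ((n : ℝ) + 1)) /
          ((k : ℝ) ^ (n + 1) * ((n + 1).factorial : ℝ)) := by
      rw [eq_div_iff (by positivity)]
      push_cast at ih ⊢
      linear_combination -ih
    have hfac : ((n + 2).factorial : ℝ) = ((n : ℝ) + 2) * ((n + 1).factorial : ℝ) := by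
      rw [Nat.factorial_succ]; push_cast; ring
    rw [show ((n + 2 : ℕ) : ℝ) = (n : ℝ) + 2 by push_cast; ring]
    rw [Finset.sum_range_succ, hR, hSig, hfac, pow_succ (k : ℝ) (n + 1), div_pow, one_pow,
      pow_succ (k : ℝ) n]
    have hKn0 : ((k : ℝ) ^ n) ≠ 0 := by positivity
    field_simp
    ring

/-- For `n,k ≥ 1`, if `S` is the sum of the entries of `σ^k_n`, then
the average flip length `(S + n)/(kⁿ·n!)` of the cyclic Gray code is strictly less than
`e^{1/k}`, the `k`-th root of Euler's number. -/
theorem average_flip_length_lt (n k : ℕ) (hn : 1 ≤ n) (hk : 1 ≤ k) :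
    (((sigmaSeq k n).sum : ℝ) + n) / ((k : ℝ) ^ n * (n.factorial : ℝ)) <
      Real.exp (1 / (k : ℝ)) := by
  have hkpos : (0 : ℝ) < k := by exact_mod_cast hk
  have hpos : (0 : ℝ) < (k : ℝ) ^ n * (n.factorial : ℝ) := by positivity
  rw [sigmaSeq_sum_add k hk n hn, mul_div_cancel_left₀ _ hpos.ne']
  calc ∑ j ∈ Finset.range n, (1 / (k : ℝ)) ^ j / j.factorial
      < ∑ j ∈ Finset.range (n + 1), (1 / (k : ℝ)) ^ j / j.factorial := by
        rw [Finset.sum_range_succ]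
        have : (0 : ℝ) < (1 / (k : ℝ)) ^ n / n.factorial := by positivity
        linarith
    _ ≤ Real.exp (1 / (k : ℝ)) := Real.sum_le_exp_of_nonneg (by positivity) _
end

section
/- For all n ≥ 3, the pancake network P_n has a Hamilton cycle: there exists a cyclic ordering of all n! permutations of {1,…,n} in which every two consecutive permutations differ by a prefix reversal of length ℓ for some 2 ≤ ℓ ≤ n. -/
/-!
`pancakePath n p` lists every rearrangement of the first `n` entries of `p` exactly once, starts
at `p`, ends at `prefixRev n p`, and consecutive entries differ by a flip of length in `[2, n]`.
At level `n + 1` it is the concatenation of the level-`n` paths starting at `p, ρ p, …, ρⁿ p`,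
where `ρ = prefixRev (n + 1) ∘ prefixRev n` moves entry `n` to the front. Block `i` ends at
`prefixRev n (ρⁱ p)`, which the flip of length `n + 1` sends to `ρⁱ⁺¹ p`; block `i` is exactly
the set of rearrangements with entry `p[n - i]` at position `n`; and since `ρ` has order `n + 1`
on the first `n + 1` entries, the last block ends at `prefixRev n (ρ⁻¹ p) = prefixRev (n + 1) p`.
For the permutations of `{1, …, n}` one more flip of length `n` closes the path into a cycle.
-/

def prefixRev (ℓ : ℕ) (p : List ℕ) : List ℕ := (p.take ℓ).reverse ++ p.drop ℓ

theorem List.exists_getElem?_eq_of_perm_of_drop_eq {α : Type*} {n : ℕ} {p q : List α}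
    (hperm : q.Perm p) (hdrop : q.drop (n + 1) = p.drop (n + 1)) (h : n < p.length) :
    ∃ j ≤ n, p[j]? = q[n]? := by
  have htake : (q.take (n + 1)).Perm (p.take (n + 1)) := by
    rw [← List.perm_append_right_iff (q.drop (n + 1)), List.take_append_drop, hdrop,
      List.take_append_drop]
    exact hperm
  have hq : n < q.length := hperm.length_eq ▸ h
  have hmem : q[n] ∈ q.take (n + 1) := by
    rw [List.mem_iff_getElem?]; exact ⟨n, by simp [hq]⟩
  obtain ⟨j, hj⟩ := List.mem_iff_getElem?.1 (htake.subset hmem)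
  rw [List.getElem?_take] at hj
  split_ifs at hj with hjn
  exact ⟨j, by omega, by rw [hj, List.getElem?_eq_getElem hq]⟩

theorem List.IsChain.rel_getD_succ_mod {α : Type*} {R : α → α → Prop} {l : List α}
    (hl : l.IsChain R) {a b : α} (ha : l.head? = some a) (hb : l.getLast? = some b)
    (hba : R b a) (d : α) {i : ℕ} (hi : i < l.length) :
    R (l.getD i d) (l.getD ((i + 1) % l.length) d) := by
  rcases Nat.lt_or_ge (i + 1) l.length with hlt | hge
  · rw [Nat.mod_eq_of_lt hlt, List.getD_eq_getElem _ _ hi, List.getD_eq_getElem _ _ hlt]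
    exact List.isChain_iff_getElem.1 hl i hlt
  · have hi' : i = l.length - 1 := by omega
    rw [show i + 1 = l.length by omega, Nat.mod_self, List.getD_eq_getElem?_getD,
      List.getD_eq_getElem?_getD, ← List.head?_eq_getElem?, hi', ← List.getLast?_eq_getElem?,
      ha, hb]
    exact hba

theorem prefixRev_append_of_length_eq {ℓ : ℕ} {l : List ℕ} (d : List ℕ) (h : l.length = ℓ) :
    prefixRev ℓ (l ++ d) = l.reverse ++ d := by
  rw [prefixRev, List.take_left' h, List.drop_left' h]

theorem prefixRev_involutive (ℓ : ℕ) : Function.Involutive (prefixRev ℓ) := fun p => by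
  rcases le_total ℓ p.length with h | h
  · simp [prefixRev, h]
  · simp [prefixRev, List.take_of_length_le, List.drop_of_length_le, h]

theorem perm_prefixRev (ℓ : ℕ) (p : List ℕ) : (prefixRev ℓ p).Perm p :=
  ((p.take ℓ).reverse_perm.append_right _).trans (by rw [p.take_append_drop ℓ])

theorem drop_prefixRev_of_le {ℓ m : ℕ} (h : ℓ ≤ m) (p : List ℕ) :
    (prefixRev ℓ p).drop m = p.drop m := by
  rcases le_total ℓ p.length with h' | h'
  · simp [prefixRev, List.drop_append, h', h]
  · simp [prefixRev, List.drop_of_length_le, h', h'.trans h]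

def PancakeFlip (m : ℕ) (p q : List ℕ) : Prop := ∃ ℓ, 2 ≤ ℓ ∧ ℓ ≤ m ∧ q = prefixRev ℓ p

theorem PancakeFlip.mono {m m' : ℕ} (h : m ≤ m') {p q : List ℕ} (hpq : PancakeFlip m p q) :
    PancakeFlip m' p q :=
  let ⟨ℓ, h2, hm, hq⟩ := hpq; ⟨ℓ, h2, hm.trans h, hq⟩

def rotateTop (n : ℕ) (p : List ℕ) : List ℕ := prefixRev (n + 1) (prefixRev n p)

theorem rotateTop_append_cons {n : ℕ} {a : List ℕ} (x : ℕ) (d : List ℕ) (h : a.length = n) :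
    rotateTop n (a ++ x :: d) = x :: (a ++ d) := by
  rw [rotateTop, prefixRev_append_of_length_eq _ h, ← List.singleton_append,
    ← List.append_assoc, prefixRev_append_of_length_eq _ (by simp [h])]
  simp

theorem getElem?_rotateTop_succ {n k : ℕ} {p : List ℕ} (h : n < p.length) (hk : k < n) :
    (rotateTop n p)[k + 1]? = p[k]? := by
  rw [← List.take_append_drop n p, List.drop_eq_getElem_cons h,
    rotateTop_append_cons _ _ (by simp; omega)]
  simp [List.getElem?_append_left, hk, h.le]

theorem perm_iterate_rotateTop (n i : ℕ) (p : List ℕ) : ((rotateTop n)^[i] p).Perm p :=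
  Function.Iterate.rec (fun q : List ℕ => q.Perm p) (List.Perm.refl p)
    (fun _ hq => ((perm_prefixRev _ _).trans (perm_prefixRev _ _)).trans hq) i

theorem length_iterate_rotateTop (n i : ℕ) (p : List ℕ) :
    ((rotateTop n)^[i] p).length = p.length :=
  (perm_iterate_rotateTop n i p).length_eq

theorem le_length_iterate_rotateTop {n : ℕ} {p : List ℕ} (h : n < p.length) (i : ℕ) :
    n ≤ ((rotateTop n)^[i] p).length := by
  rw [length_iterate_rotateTop]; omega

theorem drop_iterate_rotateTop (n i : ℕ) (p : List ℕ) :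
    ((rotateTop n)^[i] p).drop (n + 1) = p.drop (n + 1) :=
  Function.Iterate.rec (fun q : List ℕ => q.drop (n + 1) = p.drop (n + 1)) rfl
    (fun q hq => by rw [rotateTop, drop_prefixRev_of_le le_rfl,
      drop_prefixRev_of_le n.le_succ, hq]) i

theorem getElem?_iterate_rotateTop {n i k : ℕ} {p : List ℕ} (h : n < p.length) (hik : i ≤ k)
    (hk : k ≤ n) : ((rotateTop n)^[i] p)[k]? = p[k - i]? := by
  induction i generalizing k with
  | zero => rfl
  | succ i ih =>
    obtain ⟨k, rfl⟩ : ∃ j, k = j + 1 := ⟨k - 1, by omega⟩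
    rw [Function.iterate_succ_apply', getElem?_rotateTop_succ
      (by rw [length_iterate_rotateTop]; exact h) (by omega), ih (by omega) (by omega)]
    congr 1; omega

theorem iterate_rotateTop_append {n : ℕ} (d b : List ℕ) :
    ∀ a : List ℕ, a.length + b.length = n + 1 →
      (rotateTop n)^[b.length] (a ++ b ++ d) = b ++ a ++ d := by
  induction b using List.reverseRecOn with
  | nil => simp
  | append_singleton b x ih =>
    intro a h
    rw [List.length_append, List.length_singleton, Function.iterate_succ_apply,
      List.append_assoc, List.append_assoc, List.singleton_append, ← List.append_assoc,
      rotateTop_append_cons _ _ (by simp at h ⊢; omega)]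
    simpa using ih (x :: a) (by simp at h ⊢; omega)

theorem iterate_rotateTop_succ_self {n : ℕ} {p : List ℕ} (h : n < p.length) :
    (rotateTop n)^[n + 1] p = p := by
  have := iterate_rotateTop_append (n := n) (p.drop (n + 1)) (p.take (n + 1)) [] (by simp; omega)
  rwa [List.length_take_of_le h, List.nil_append, List.append_nil, List.take_append_drop] at this

theorem prefixRev_iterate_rotateTop_self {n : ℕ} {p : List ℕ} (h : n < p.length) :
    prefixRev n ((rotateTop n)^[n] p) = prefixRev (n + 1) p := by
  conv_rhs => rw [← iterate_rotateTop_succ_self h, Function.iterate_succ_apply', rotateTop,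
    prefixRev_involutive]

def pancakePath : ℕ → List ℕ → List (List ℕ)
  | 0, p => [p]
  | n + 1, p => ((List.range (n + 1)).map fun i => (rotateTop n)^[i] p).flatMap (pancakePath n)

theorem length_pancakePath (n : ℕ) (p : List ℕ) : (pancakePath n p).length = n.factorial := by
  induction n generalizing p with
  | zero => rfl
  | succ n ih => simp [pancakePath, List.length_flatMap, ih, Nat.factorial_succ]; ring

theorem head?_pancakePath (n : ℕ) (p : List ℕ) : (pancakePath n p).head? = some p := by
  induction n generalizing p with
  | zero => rfl
  | succ n ih => simp [pancakePath, List.range_succ_eq_map, List.head?_append, ih]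

theorem pancakePath_ne_nil (n : ℕ) (p : List ℕ) : pancakePath n p ≠ [] := by
  simpa using List.ne_nil_of_mem (List.mem_of_mem_head? (head?_pancakePath n p))

theorem getLast?_pancakePath {n : ℕ} {p : List ℕ} (h : n ≤ p.length) :
    (pancakePath n p).getLast? = some (prefixRev n p) := by
  induction n generalizing p with
  | zero => simp [pancakePath, prefixRev]
  | succ n ih =>
    simp [pancakePath, List.range_succ, List.getLast?_append, ih (le_length_iterate_rotateTop h n),
      prefixRev_iterate_rotateTop_self (Nat.lt_of_succ_le h)]

theorem isChain_pancakePath {n : ℕ} {p : List ℕ} (h : n ≤ p.length) :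
    (pancakePath n p).IsChain (PancakeFlip n) := by
  induction n generalizing p with
  | zero => exact List.isChain_singleton p
  | succ n ih =>
    have hlen := le_length_iterate_rotateTop h
    rw [pancakePath, List.flatMap_def, List.isChain_flatten (by simp [pancakePath_ne_nil])]
    refine ⟨?_, ?_⟩
    · simp only [List.mem_map, List.mem_range]
      rintro _ ⟨_, ⟨i, -, rfl⟩, rfl⟩
      exact (ih (hlen i)).imp fun _ _ => PancakeFlip.mono n.le_succ
    · rw [List.isChain_map, List.isChain_map, List.isChain_range]
      intro i hi x hx y hy
      rw [getLast?_pancakePath (hlen i), Option.mem_some_iff] at hx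
      rw [head?_pancakePath, Option.mem_some_iff, Function.iterate_succ_apply'] at hy
      exact ⟨n + 1, by omega, le_rfl, by rw [← hx, ← hy, rotateTop]⟩

theorem mem_pancakePath {n : ℕ} {p q : List ℕ} (h : n ≤ p.length) :
    q ∈ pancakePath n p ↔ q.Perm p ∧ q.drop n = p.drop n := by
  induction n generalizing p with
  | zero =>
    simp only [pancakePath, List.mem_singleton, List.drop_zero]
    exact ⟨fun hqp => ⟨hqp ▸ .refl q, hqp⟩, And.right⟩
  | succ n ih =>
    have hlen := le_length_iterate_rotateTop h
    simp only [pancakePath, List.mem_flatMap, List.mem_map, List.mem_range]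
    constructor
    · rintro ⟨_, ⟨i, hi, rfl⟩, hq⟩
      obtain ⟨hperm, hdrop⟩ := (ih (hlen i)).1 hq
      refine ⟨hperm.trans (perm_iterate_rotateTop n i p), ?_⟩
      rw [← List.drop_drop, hdrop, List.drop_drop, drop_iterate_rotateTop]
    · rintro ⟨hperm, hdrop⟩
      obtain ⟨j, hj, hqj⟩ := List.exists_getElem?_eq_of_perm_of_drop_eq hperm hdrop h
      refine ⟨_, ⟨n - j, by omega, rfl⟩, (ih (hlen _)).2
        ⟨hperm.trans (perm_iterate_rotateTop _ _ _).symm, ?_⟩⟩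
      rw [List.drop_eq_getElem?_toList_append, List.drop_eq_getElem?_toList_append (l := _^[_] p),
        drop_iterate_rotateTop, hdrop, getElem?_iterate_rotateTop h (by omega) le_rfl,
        Nat.sub_sub_self hj, hqj]

theorem getElem?_eq_of_mem_pancakePath {n : ℕ} {p q : List ℕ} (h : n ≤ p.length)
    (hq : q ∈ pancakePath n p) : q[n]? = p[n]? := by
  simpa only [List.head?_drop] using congrArg List.head? ((mem_pancakePath h).1 hq).2

theorem nodup_pancakePath {n : ℕ} {p : List ℕ} (hp : p.Nodup) (h : n ≤ p.length) :
    (pancakePath n p).Nodup := by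
  induction n generalizing p with
  | zero => exact List.nodup_singleton p
  | succ n ih =>
    have hlen := le_length_iterate_rotateTop h
    rw [pancakePath, List.nodup_flatMap, List.forall_mem_map, List.pairwise_map]
    refine ⟨fun i _ => ih ((perm_iterate_rotateTop n i p).nodup_iff.2 hp) (hlen i), ?_⟩
    refine List.nodup_range.imp_of_mem fun {i j} hi hj hij q hqi hqj => hij ?_
    rw [List.mem_range] at hi hj
    have := (getElem?_eq_of_mem_pancakePath (hlen i) hqi).symm.trans
      (getElem?_eq_of_mem_pancakePath (hlen j) hqj)
    rw [getElem?_iterate_rotateTop h (by omega) le_rfl,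
      getElem?_iterate_rotateTop h (by omega) le_rfl, List.getElem?_inj (by omega) hp] at this
    omega

/-- For `n ≥ 3`, the pancake network `P_n` has a Hamilton cycle:
there is a cyclic ordering of all `n!` permutations of `{1,…,n}` in which every two
consecutive permutations differ by a prefix reversal of length `ℓ` with `2 ≤ ℓ ≤ n`. -/
theorem pancake_hamilton (n : ℕ) (hn : 3 ≤ n) :
    ∃ L : List (List ℕ),
      L.length = n.factorial ∧
      (∀ p : List ℕ, p.Perm ((List.range n).map (· + 1)) → L.count p = 1) ∧
      ∀ i < L.length, ∃ ℓ, 2 ≤ ℓ ∧ ℓ ≤ n ∧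
        L.getD ((i + 1) % L.length) [] = prefixRev ℓ (L.getD i []) := by
  set p₀ := (List.range n).map (· + 1)
  have hlen : p₀.length = n := by simp [p₀]
  have hnd : p₀.Nodup := List.nodup_range.map (add_left_injective 1)
  refine ⟨pancakePath n p₀, length_pancakePath n p₀, fun q hq => ?_, fun i hi => ?_⟩
  · have hdrop : q.drop n = p₀.drop n := by
      rw [List.drop_of_length_le (hq.length_eq.trans hlen).le, List.drop_of_length_le hlen.le]
    exact List.count_eq_one_of_mem (nodup_pancakePath hnd hlen.ge)
      ((mem_pancakePath hlen.ge).2 ⟨hq, hdrop⟩)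
  · exact (isChain_pancakePath hlen.ge).rel_getD_succ_mod (head?_pancakePath n p₀)
      (getLast?_pancakePath hlen.ge) ⟨n, by omega, le_rfl, (prefixRev_involutive n p₀).symm⟩ [] hi
end
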